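/- arXiv:2112.11960 — 5 statements merged into one kernel-verified Lean document; each statement's English description precedes it below -/
import Mathlib

section
/- Let g = n ⋊_B ℝe be the Lie algebra built on ℝe₁ ⊕ k ⊕ ℝe, where [Y,Z] = -η(Y,Z)e₁ for Y,Z ∈ k, [e, e₁] = a·e₁, [e, X] = β(X)e₁ + A(X) for X ∈ k (B assumed a derivation of n), with η ≠ 0. Let J be an almost complex structure on g with J e₁ = e, J(k) = k. Then the Nijenhuis tensor of J vanishes if and only if: A commutes with J restricted to k, β = 0, and η(JX, JY) = η(X,Y) for all X,Y ∈ k. -/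
/-!
Since `J e₁ = e`, `J² = -1` and `J` preserves `k`, the structure is forced to be
`J (p, X, s) = (-s, J X, p)`, so the Nijenhuis tensor of `J` for the bracket of `g` can be
computed in closed form. Its components are linear in `β ∘ J`, `β`, `[A, J]`, `A + J A J` and
the two defects `η - η(J·, J·)`, `η(J·, ·) + η(·, J·)`. Evaluating at `(e₁, Y)` and at `(X, Y)`
isolates `[A, J]`, `β` and the (1,1)-defect; conversely, when `J² = -1` the remaining terms are
expressed through these three.
-/

namespace SemidirectNijenhuis

variable {k : Type*} [AddCommGroup k] [Module ℝ k]

/-- The bracket of `g = ℝe₁ ⊕ k ⊕ ℝe`, written in the coordinates `(e₁, k, e)`. -/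
def bracket (η : k →ₗ[ℝ] k →ₗ[ℝ] ℝ) (a : ℝ) (β : k →ₗ[ℝ] ℝ) (A : k →ₗ[ℝ] k)
    (P Q : ℝ × k × ℝ) : ℝ × k × ℝ :=
  (P.2.2 * (a * Q.1 + β Q.2.1) - Q.2.2 * (a * P.1 + β P.2.1) - η P.2.1 Q.2.1,
    P.2.2 • A Q.2.1 - Q.2.2 • A P.2.1, 0)

def nijenhuis {V : Type*} [AddCommGroup V] (br : V → V → V) (J : V → V) (P Q : V) : V :=
  br (J P) (J Q) - J (br (J P) Q) - J (br P (J Q)) - br P Q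

/-- The extension of `Jk` by `e₁ ↦ e ↦ -e₁`. -/
def extendJ (Jk : k →ₗ[ℝ] k) (P : ℝ × k × ℝ) : ℝ × k × ℝ :=
  (-P.2.2, Jk P.2.1, P.1)

theorem eq_extendJ {J : (ℝ × k × ℝ) →ₗ[ℝ] (ℝ × k × ℝ)} (hJ2 : ∀ P, J (J P) = -P)
    (hJe1 : J (1, 0, 0) = (0, 0, 1)) {Jk : k →ₗ[ℝ] k} (hJk : ∀ X : k, J (0, X, 0) = (0, Jk X, 0)) :
    ⇑J = extendJ Jk := by
  have hJe : J (0, 0, 1) = (-1, 0, 0) := by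
    rw [← hJe1, hJ2]
    simp
  funext ⟨p, X, s⟩
  have hP : ((p, X, s) : ℝ × k × ℝ) = p • (1, 0, 0) + (0, X, 0) + s • (0, 0, 1) := by
    simp [Prod.smul_mk]
  rw [hP, map_add, map_add, map_smul, map_smul, hJe1, hJk, hJe]
  simp [extendJ, Prod.smul_mk]

theorem restrict_apply_apply {J : (ℝ × k × ℝ) →ₗ[ℝ] (ℝ × k × ℝ)} (hJ2 : ∀ P, J (J P) = -P)
    {Jk : k →ₗ[ℝ] k} (hJk : ∀ X : k, J (0, X, 0) = (0, Jk X, 0)) (X : k) :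
    Jk (Jk X) = -X := by
  simpa [hJk] using congrArg (fun P : ℝ × k × ℝ => P.2.1) (hJ2 (0, X, 0))

variable (η : k →ₗ[ℝ] k →ₗ[ℝ] ℝ) (a : ℝ) (β : k →ₗ[ℝ] ℝ) (A Jk : k →ₗ[ℝ] k)

theorem nijenhuis_bracket_extendJ (p q s t : ℝ) (X Y : k) :
    nijenhuis (bracket η a β A) (extendJ Jk) (p, X, s) (q, Y, t) =
      (p * β (Jk Y) - q * β (Jk X) - s * β Y + t * β X + η X Y - η (Jk X) (Jk Y),
        p • (A (Jk Y) - Jk (A Y)) - q • (A (Jk X) - Jk (A X))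
          - s • (A Y + Jk (A (Jk Y))) + t • (A X + Jk (A (Jk X))),
        q * β X - p * β Y - s * β (Jk Y) + t * β (Jk X) + η (Jk X) Y + η X (Jk Y)) := by
  simp only [nijenhuis, bracket, extendJ, Prod.mk_sub_mk, map_sub, map_smul, Prod.mk.injEq]
  refine ⟨by ring, by module, by ring⟩

theorem nijenhuis_bracket_extendJ_eq_zero_iff (hJk2 : ∀ X, Jk (Jk X) = -X) :
    (∀ P Q, nijenhuis (bracket η a β A) (extendJ Jk) P Q = 0) ↔
      ((∀ X, A (Jk X) = Jk (A X)) ∧ β = 0 ∧ ∀ X Y, η (Jk X) (Jk Y) = η X Y) := by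
  constructor
  · intro hN
    have he₁ (Y : k) := hN (1, 0, 0) (0, Y, 0)
    have hk (X Y : k) := hN (0, X, 0) (0, Y, 0)
    simp only [nijenhuis_bracket_extendJ, Prod.mk_eq_zero] at he₁ hk
    refine ⟨fun Y => ?_, LinearMap.ext fun Y => ?_, fun X Y => ?_⟩
    · simpa [sub_eq_zero] using (he₁ Y).2.1
    · simpa using (he₁ Y).2.2
    · exact (sub_eq_zero.mp (by simpa using (hk X Y).1)).symm
  · rintro ⟨hA, rfl, hη⟩ ⟨p, X, s⟩ ⟨q, Y, t⟩
    have hηJ (X Y : k) : η (Jk X) Y = -η X (Jk Y) := by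
      rw [← hη (Jk X), hJk2, map_neg, LinearMap.neg_apply]
    simp [nijenhuis_bracket_extendJ, hA, hJk2, hη, hηJ]

end SemidirectNijenhuis

open SemidirectNijenhuis in
theorem stmt_1_general {k : Type*} [AddCommGroup k] [Module ℝ k]
    (η : k →ₗ[ℝ] k →ₗ[ℝ] ℝ)
    (a : ℝ) (β : k →ₗ[ℝ] ℝ) (A : k →ₗ[ℝ] k)
    (br : (ℝ × k × ℝ) → (ℝ × k × ℝ) → (ℝ × k × ℝ))
    (hbr : ∀ P Q : ℝ × k × ℝ, br P Q =
      (P.2.2 * (a * Q.1 + β Q.2.1) - Q.2.2 * (a * P.1 + β P.2.1) - η P.2.1 Q.2.1,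
       P.2.2 • A Q.2.1 - Q.2.2 • A P.2.1, 0))
    (J : (ℝ × k × ℝ) →ₗ[ℝ] (ℝ × k × ℝ))
    (hJ2 : ∀ P, J (J P) = -P)
    (hJe1 : J (1, 0, 0) = (0, 0, 1))
    (Jk : k →ₗ[ℝ] k)
    (hJk : ∀ X : k, J (0, X, 0) = (0, Jk X, 0)) :
    (∀ P Q : ℝ × k × ℝ,
        br (J P) (J Q) - J (br (J P) Q) - J (br P (J Q)) - br P Q = 0) ↔
      ((∀ X : k, A (Jk X) = Jk (A X)) ∧ β = 0 ∧
        ∀ X Y : k, η (Jk X) (Jk Y) = η X Y) := by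
  obtain rfl : br = bracket η a β A := funext₂ hbr
  simp only [eq_extendJ hJ2 hJe1 hJk]
  exact nijenhuis_bracket_extendJ_eq_zero_iff η a β A Jk (restrict_apply_apply hJ2 hJk)

/-- Integrability of an almost complex structure `J` with `J e₁ = e`, `J(k) = k`
on `g = n ⋊_B ℝe` is equivalent to `[A, J|_k] = 0`, `β = 0`, and `η` of type (1,1). -/
theorem stmt_1 {k : Type*} [AddCommGroup k] [Module ℝ k] [FiniteDimensional ℝ k]
    (η : k →ₗ[ℝ] k →ₗ[ℝ] ℝ) (hη_alt : ∀ X Y : k, η X Y = - η Y X) (hη_ne : η ≠ 0)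
    (a : ℝ) (β : k →ₗ[ℝ] ℝ) (A : k →ₗ[ℝ] k)
    (hder : ∀ X Y : k, η (A X) Y + η X (A Y) = a * η X Y)
    (br : (ℝ × k × ℝ) → (ℝ × k × ℝ) → (ℝ × k × ℝ))
    (hbr : ∀ P Q : ℝ × k × ℝ, br P Q =
      (P.2.2 * (a * Q.1 + β Q.2.1) - Q.2.2 * (a * P.1 + β P.2.1) - η P.2.1 Q.2.1,
       P.2.2 • A Q.2.1 - Q.2.2 • A P.2.1, 0))
    (J : (ℝ × k × ℝ) →ₗ[ℝ] (ℝ × k × ℝ))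
    (hJ2 : ∀ P, J (J P) = -P)
    (hJe1 : J (1, 0, 0) = (0, 0, 1))
    (Jk : k →ₗ[ℝ] k)
    (hJk : ∀ X : k, J (0, X, 0) = (0, Jk X, 0)) :
    (∀ P Q : ℝ × k × ℝ,
        br (J P) (J Q) - J (br (J P) Q) - J (br P (J Q)) - br P Q = 0) ↔
      ((∀ X : k, A (Jk X) = Jk (A X)) ∧ β = 0 ∧
        ∀ X Y : k, η (Jk X) (Jk Y) = η X Y) :=
  stmt_1_general η a β A br hbr J hJ2 hJe1 Jk hJk
end

section
/- With the setup of the previous Hermitian Lie algebra (β = 0, J integrable, so [A, J|_{k₁}] = 0 and η of type (1,1)), the structure is SKT (i.e., d(Jdω) = 0, where (Jσ)(X,Y,Z) := -σ(JX,JY,JZ) for a 3-form σ) if and only if η∧η = η ∧ A*ω and (aA + A² + AᵗA)*ω = 2a·η on k₁. In particular, it is Kähler (dω = 0) if and only if η = A*ω. -/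
open scoped RealInnerProductSpace

/-!
Put `ψ := η - A*ω` on `k₁`. A direct computation gives `dω = e⁴ ∧ ψ`, and since `ψ` is
`J`-invariant, `Jdω = -e¹ ∧ ψ`. As `[X, Y] = -η(X, Y) e₁` on `k₁` and `e₄` acts by
`diag(a, A, 0)`, the 4-form `d(e¹ ∧ ψ)` has a `Λ⁴k₁`-component `η ∧ ψ` and an
`e¹ ∧ e⁴ ∧ Λ²k₁`-component `aψ + A*ψ`. The second one equals `2aη - (aA + A² + AᵗA)*ω`:
this uses `A*η = aη` and `ω(A·, A·) = ½ (AᵗA)*ω`, which holds because `Aᵗ` commutes with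
`J` along with `A`.
-/

section Forms

variable {R M : Type*} [CommRing R] [AddCommGroup M] [Module R M]

/-- The paper's `F*β` (no minus sign). -/
def formAct (F : M →ₗ[R] M) (β : M →ₗ[R] M →ₗ[R] R) : M →ₗ[R] M →ₗ[R] R :=
  β ∘ₗ F + β.compl₂ F

@[simp]
lemma formAct_apply (F : M →ₗ[R] M) (β : M →ₗ[R] M →ₗ[R] R) (x y : M) :
    formAct F β x y = β (F x) y + β x (F y) :=
  rfl

def wedge₂₂ (α β : M →ₗ[R] M →ₗ[R] R) (x y z w : M) : R :=
  α x y * β z w - α x z * β y w + α x w * β y z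
    + α y z * β x w - α y w * β x z + α z w * β x y

lemma wedge₂₂_sub_right (α β γ : M →ₗ[R] M →ₗ[R] R) (x y z w : M) :
    wedge₂₂ α (β - γ) x y z w = wedge₂₂ α β x y z w - wedge₂₂ α γ x y z w := by
  simp only [wedge₂₂, LinearMap.sub_apply]
  ring

end Forms

section Hermitian

variable {k : Type*} [NormedAddCommGroup k] [InnerProductSpace ℝ k]

lemma inner_apply_eq_neg_inner_apply_of_sq_eq_neg {Jk : k →ₗ[ℝ] k}
    (hJk2 : ∀ X, Jk (Jk X) = -X) (hJkorth : ∀ X Y : k, ⟪Jk X, Jk Y⟫ = ⟪X, Y⟫) (X Y : k) :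
    ⟪Jk X, Y⟫ = -⟪X, Jk Y⟫ := by
  rw [← hJkorth X (Jk Y), hJk2, inner_neg_right, neg_neg]

/-- The restriction of `ω` to `k₁`. -/
noncomputable def omega₁ (Jk : k →ₗ[ℝ] k) : k →ₗ[ℝ] k →ₗ[ℝ] ℝ :=
  innerₗ k ∘ₗ Jk

@[simp]
lemma omega₁_apply (Jk : k →ₗ[ℝ] k) (X Y : k) : omega₁ Jk X Y = ⟪Jk X, Y⟫ :=
  rfl

noncomputable def kahlerDefect (A Jk : k →ₗ[ℝ] k) (η : k →ₗ[ℝ] k →ₗ[ℝ] ℝ) : k →ₗ[ℝ] k →ₗ[ℝ] ℝ :=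
  η - formAct A (omega₁ Jk)

variable {A Jk : k →ₗ[ℝ] k} {η : k →ₗ[ℝ] k →ₗ[ℝ] ℝ}

lemma kahlerDefect_antisymm (hη_alt : ∀ X Y : k, η X Y = -η Y X)
    (hJk : ∀ X Y : k, ⟪Jk X, Y⟫ = -⟪X, Jk Y⟫) (X Y : k) :
    kahlerDefect A Jk η X Y = -kahlerDefect A Jk η Y X := by
  simp only [kahlerDefect, LinearMap.sub_apply, formAct_apply, omega₁_apply]
  linear_combination hη_alt X Y - hJk (A X) Y - real_inner_comm (A X) (Jk Y)
    - hJk (A Y) X - real_inner_comm (A Y) (Jk X)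

lemma kahlerDefect_apply_J_apply_J (hJkorth : ∀ X Y : k, ⟪Jk X, Jk Y⟫ = ⟪X, Y⟫)
    (hcomm : ∀ X : k, A (Jk X) = Jk (A X)) (h11 : ∀ X Y : k, η (Jk X) (Jk Y) = η X Y)
    (X Y : k) :
    kahlerDefect A Jk η (Jk X) (Jk Y) = kahlerDefect A Jk η X Y := by
  simp only [kahlerDefect, LinearMap.sub_apply, formAct_apply, omega₁_apply]
  rw [hcomm, hcomm, hJkorth (Jk (A X)), hJkorth (Jk X), h11]

lemma smul_kahlerDefect_add_formAct_kahlerDefect [FiniteDimensional ℝ k] (a : ℝ)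
    (hJk : ∀ X Y : k, ⟪Jk X, Y⟫ = -⟪X, Jk Y⟫) (hcomm : ∀ X : k, A (Jk X) = Jk (A X))
    (hder : ∀ X Y : k, η (A X) Y + η X (A Y) = a * η X Y) (X Y : k) :
    (a • kahlerDefect A Jk η + formAct A (kahlerDefect A Jk η)) X Y =
      2 * a * η X Y
        - formAct (a • A + A ∘ₗ A + LinearMap.adjoint A ∘ₗ A) (omega₁ Jk) X Y := by
  have adjoint_left : ⟪Jk (LinearMap.adjoint A (A X)), Y⟫ = ⟪Jk (A X), A Y⟫ := by
    rw [hJk, LinearMap.adjoint_inner_left, hcomm, hJk]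
  have adjoint_right : ⟪Jk X, LinearMap.adjoint A (A Y)⟫ = ⟪Jk (A X), A Y⟫ := by
    rw [LinearMap.adjoint_inner_right, hcomm]
  simp only [kahlerDefect, formAct_apply, omega₁_apply, LinearMap.add_apply,
    LinearMap.sub_apply, LinearMap.smul_apply, LinearMap.comp_apply, map_add, map_smul,
    smul_eq_mul]
  linear_combination hder X Y + adjoint_left + adjoint_right

end Hermitian

section ChevalleyEilenberg

variable {V : Type*}

def ceDiff₂ (br : V → V → V) (ω : V → V → ℝ) (P Q R : V) : ℝ :=
  -(ω (br P Q) R) - ω (br R P) Q - ω (br Q R) P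

def ceDiff₃ (br : V → V → V) (σ : V → V → V → ℝ) (P Q R S : V) : ℝ :=
  -(σ (br P Q) R S) + σ (br P R) Q S - σ (br P S) Q R
    - σ (br Q R) P S + σ (br Q S) P R - σ (br R S) P Q

def jForm (J : V → V) (σ : V → V → V → ℝ) (P Q R : V) : ℝ :=
  -σ (J P) (J Q) (J R)

end ChevalleyEilenberg

namespace AlmostNilpotent

variable {k : Type*} [NormedAddCommGroup k] [InnerProductSpace ℝ k]

/-- The Lie bracket `μ(a, 0, A, η)` on `ℝe₁ ⊕ k₁ ⊕ ℝe₄`, a vector being `(x₁, X, x₄)`: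
`ad e₄ = diag(a, A, 0)` and `[X, Y] = -η(X, Y) e₁` on `k₁`. -/
def bracket (a : ℝ) (A : k →ₗ[ℝ] k) (η : k →ₗ[ℝ] k →ₗ[ℝ] ℝ) (P Q : ℝ × k × ℝ) : ℝ × k × ℝ :=
  (P.2.2 * (a * Q.1) - Q.2.2 * (a * P.1) - η P.2.1 Q.2.1,
    P.2.2 • A Q.2.1 - Q.2.2 • A P.2.1, 0)

def cplx (Jk : k →ₗ[ℝ] k) (P : ℝ × k × ℝ) : ℝ × k × ℝ :=
  (-P.2.2, Jk P.2.1, P.1)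

def metric (P Q : ℝ × k × ℝ) : ℝ :=
  P.1 * Q.1 + ⟪P.2.1, Q.2.1⟫ + P.2.2 * Q.2.2

def fundForm (Jk : k →ₗ[ℝ] k) (P Q : ℝ × k × ℝ) : ℝ :=
  metric (cplx Jk P) Q

/-- `f ∧ ψ` for a linear form `f` and a 2-form `ψ` on `k₁` pulled back along `P ↦ P.2.1`. -/
def wedge₁₂ (f : ℝ × k × ℝ → ℝ) (ψ : k →ₗ[ℝ] k →ₗ[ℝ] ℝ) (P Q R : ℝ × k × ℝ) : ℝ :=
  f P * ψ Q.2.1 R.2.1 + f Q * ψ R.2.1 P.2.1 + f R * ψ P.2.1 Q.2.1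

variable {a : ℝ} {A Jk : k →ₗ[ℝ] k} {η ψ : k →ₗ[ℝ] k →ₗ[ℝ] ℝ}

lemma ceDiff₂_fundForm (hJk : ∀ X Y : k, ⟪Jk X, Y⟫ = -⟪X, Jk Y⟫) :
    ceDiff₂ (bracket a A η) (fundForm Jk) = wedge₁₂ (fun P => P.2.2) (kahlerDefect A Jk η) := by
  have inner_J_A : ∀ X Y : k, ⟪Jk X, A Y⟫ = -⟪Jk (A Y), X⟫ := fun X Y => by
    rw [hJk, real_inner_comm]
  ext P Q R
  simp only [ceDiff₂, fundForm, metric, cplx, bracket, wedge₁₂, kahlerDefect, formAct_apply,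
    omega₁_apply, LinearMap.sub_apply, map_sub, map_smul, inner_sub_left, real_inner_smul_left,
    neg_zero, zero_mul, zero_add, inner_J_A]
  ring

lemma wedge₁₂_snd_snd_eq_zero_iff :
    (∀ P Q R, wedge₁₂ (fun P => P.2.2) ψ P Q R = 0) ↔ ∀ X Y, ψ X Y = 0 := by
  refine ⟨fun h X Y => ?_, fun h P Q R => by simp only [wedge₁₂, h, mul_zero, add_zero]⟩
  simpa [wedge₁₂] using h (0, 0, 1) (0, X, 0) (0, Y, 0)

lemma jForm_cplx_wedge₁₂_snd_snd (hψ : ∀ X Y, ψ (Jk X) (Jk Y) = ψ X Y) :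
    jForm (cplx Jk) (wedge₁₂ (fun P => P.2.2) ψ) = -wedge₁₂ Prod.fst ψ := by
  ext P Q R
  simp only [jForm, cplx, wedge₁₂, hψ, Pi.neg_apply]

lemma ceDiff₃_neg_wedge₁₂_fst (hψ : ∀ X Y, ψ X Y = -ψ Y X) (P Q R S : ℝ × k × ℝ) :
    ceDiff₃ (bracket a A η) (-wedge₁₂ Prod.fst ψ) P Q R S =
      -wedge₂₂ η ψ P.2.1 Q.2.1 R.2.1 S.2.1
        + (P.2.2 * Q.1 - Q.2.2 * P.1) * (a • ψ + formAct A ψ) R.2.1 S.2.1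
        - (P.2.2 * R.1 - R.2.2 * P.1) * (a • ψ + formAct A ψ) Q.2.1 S.2.1
        + (P.2.2 * S.1 - S.2.2 * P.1) * (a • ψ + formAct A ψ) Q.2.1 R.2.1
        + (Q.2.2 * R.1 - R.2.2 * Q.1) * (a • ψ + formAct A ψ) P.2.1 S.2.1
        - (Q.2.2 * S.1 - S.2.2 * Q.1) * (a • ψ + formAct A ψ) P.2.1 R.2.1
        + (R.2.2 * S.1 - S.2.2 * R.1) * (a • ψ + formAct A ψ) P.2.1 Q.2.1 := by
  have hψA : ∀ X Y, ψ X (A Y) = -ψ (A Y) X := fun X Y => hψ X (A Y)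
  simp only [ceDiff₃, wedge₁₂, wedge₂₂, bracket, Pi.neg_apply, formAct_apply,
    LinearMap.add_apply, LinearMap.smul_apply, map_sub, map_smul, LinearMap.sub_apply,
    LinearMap.smul_apply, smul_eq_mul, hψA]
  ring

lemma ceDiff₃_neg_wedge₁₂_fst_eq_zero_iff (hψ : ∀ X Y, ψ X Y = -ψ Y X) :
    (∀ P Q R S, ceDiff₃ (bracket a A η) (-wedge₁₂ Prod.fst ψ) P Q R S = 0) ↔
      (∀ X Y Z W, wedge₂₂ η ψ X Y Z W = 0) ∧ ∀ X Y, (a • ψ + formAct A ψ) X Y = 0 := by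
  simp only [ceDiff₃_neg_wedge₁₂_fst hψ]
  refine ⟨fun h => ⟨fun X Y Z W => ?_, fun X Y => ?_⟩, fun ⟨h₄, h₂⟩ P Q R S => ?_⟩
  · simpa using h (0, X, 0) (0, Y, 0) (0, Z, 0) (0, W, 0)
  · simpa [wedge₂₂] using h (0, 0, 1) (1, 0, 0) (0, X, 0) (0, Y, 0)
  · simp only [h₄, h₂]
    ring

end AlmostNilpotent

theorem stmt_3_general {k : Type*} [NormedAddCommGroup k] [InnerProductSpace ℝ k]
    [FiniteDimensional ℝ k]
    (a : ℝ) (A : k →ₗ[ℝ] k) (η : k →ₗ[ℝ] k →ₗ[ℝ] ℝ) (Jk : k →ₗ[ℝ] k)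
    (hη_alt : ∀ X Y : k, η X Y = - η Y X)
    (hJk2 : ∀ X, Jk (Jk X) = -X)
    (hJkorth : ∀ X Y : k, ⟪Jk X, Jk Y⟫ = ⟪X, Y⟫)
    (hcomm : ∀ X : k, A (Jk X) = Jk (A X))
    (h11 : ∀ X Y : k, η (Jk X) (Jk Y) = η X Y)
    (hder : ∀ X Y : k, η (A X) Y + η X (A Y) = a * η X Y)
    (br : (ℝ × k × ℝ) → (ℝ × k × ℝ) → (ℝ × k × ℝ))
    (hbr : ∀ P Q : ℝ × k × ℝ, br P Q =
      (P.2.2 * (a * Q.1) - Q.2.2 * (a * P.1) - η P.2.1 Q.2.1,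
       P.2.2 • A Q.2.1 - Q.2.2 • A P.2.1, 0))
    (J : (ℝ × k × ℝ) → (ℝ × k × ℝ))
    (hJ : ∀ P : ℝ × k × ℝ, J P = (-P.2.2, Jk P.2.1, P.1))
    (g ω : (ℝ × k × ℝ) → (ℝ × k × ℝ) → ℝ)
    (hg : ∀ P Q : ℝ × k × ℝ, g P Q = P.1 * Q.1 + ⟪P.2.1, Q.2.1⟫ + P.2.2 * Q.2.2)
    (hω : ∀ P Q, ω P Q = g (J P) Q)
    (dω : (ℝ × k × ℝ) → (ℝ × k × ℝ) → (ℝ × k × ℝ) → ℝ)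
    (hdω : ∀ P Q R, dω P Q R = -(ω (br P Q) R) - ω (br R P) Q - ω (br Q R) P)
    (σ : (ℝ × k × ℝ) → (ℝ × k × ℝ) → (ℝ × k × ℝ) → ℝ)
    (hσ : ∀ P Q R, σ P Q R = -(dω (J P) (J Q) (J R))) :
    ((∀ P Q R S : ℝ × k × ℝ,
        -(σ (br P Q) R S) + σ (br P R) Q S - σ (br P S) Q R
          - σ (br Q R) P S + σ (br Q S) P R - σ (br R S) P Q = 0) ↔
      ((∀ X Y Z W : k,
          η X Y * η Z W - η X Z * η Y W + η X W * η Y Z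
            + η Y Z * η X W - η Y W * η X Z + η Z W * η X Y
          = η X Y * (⟪Jk (A Z), W⟫ + ⟪Jk Z, A W⟫)
            - η X Z * (⟪Jk (A Y), W⟫ + ⟪Jk Y, A W⟫)
            + η X W * (⟪Jk (A Y), Z⟫ + ⟪Jk Y, A Z⟫)
            + η Y Z * (⟪Jk (A X), W⟫ + ⟪Jk X, A W⟫)
            - η Y W * (⟪Jk (A X), Z⟫ + ⟪Jk X, A Z⟫)
            + η Z W * (⟪Jk (A X), Y⟫ + ⟪Jk X, A Y⟫)) ∧
        (∀ X Y : k,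
          ⟪Jk ((a • A + A ∘ₗ A + (LinearMap.adjoint A) ∘ₗ A) X), Y⟫
            + ⟪Jk X, (a • A + A ∘ₗ A + (LinearMap.adjoint A) ∘ₗ A) Y⟫
          = 2 * a * η X Y)))
    ∧ ((∀ P Q R, dω P Q R = 0) ↔
        (∀ X Y : k, η X Y = ⟪Jk (A X), Y⟫ + ⟪Jk X, A Y⟫)) := by
  open AlmostNilpotent in
  obtain rfl : J = cplx Jk := funext hJ
  obtain rfl : g = metric := funext₂ hg
  obtain rfl : ω = fundForm Jk := funext₂ hω
  obtain rfl : br = bracket a A η := funext₂ hbr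
  obtain rfl : dω = ceDiff₂ (bracket a A η) (fundForm Jk) := funext₃ hdω
  have hJk := inner_apply_eq_neg_inner_apply_of_sq_eq_neg hJk2 hJkorth
  rw [ceDiff₂_fundForm hJk] at hσ ⊢
  obtain rfl : σ = -wedge₁₂ Prod.fst (kahlerDefect A Jk η) :=
    (funext₃ hσ).trans
      (jForm_cplx_wedge₁₂_snd_snd (kahlerDefect_apply_J_apply_J hJkorth hcomm h11))
  refine ⟨(ceDiff₃_neg_wedge₁₂_fst_eq_zero_iff (kahlerDefect_antisymm hη_alt hJk)).trans
    (and_congr (forall₄_congr fun X Y Z W => ?_) (forall₂_congr fun X Y => ?_)),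
    wedge₁₂_snd_snd_eq_zero_iff.trans (forall₂_congr fun X Y => ?_)⟩
  · rw [kahlerDefect, wedge₂₂_sub_right, sub_eq_zero]
    rfl
  · rw [smul_kahlerDefect_add_formAct_kahlerDefect a hJk hcomm hder, sub_eq_zero, eq_comm]
    rfl
  · rw [kahlerDefect, LinearMap.sub_apply, LinearMap.sub_apply, sub_eq_zero]
    rfl

/-- SKT characterization: the Hermitian almost nilpotent Lie algebra
`(μ(a,0,A,η), J, g)` is SKT iff `η∧η = η ∧ A*ω` and `(aA + A² + AᵗA)*ω = 2aη`;
it is Kähler iff `η = A*ω`. -/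
theorem stmt_3 {k : Type*} [NormedAddCommGroup k] [InnerProductSpace ℝ k]
    [FiniteDimensional ℝ k]
    (a : ℝ) (A : k →ₗ[ℝ] k) (η : k →ₗ[ℝ] k →ₗ[ℝ] ℝ) (Jk : k →ₗ[ℝ] k)
    (hη_alt : ∀ X Y : k, η X Y = - η Y X) (hη_ne : η ≠ 0)
    (hJk2 : ∀ X, Jk (Jk X) = -X)
    (hJkorth : ∀ X Y : k, ⟪Jk X, Jk Y⟫ = ⟪X, Y⟫)
    (hcomm : ∀ X : k, A (Jk X) = Jk (A X))
    (h11 : ∀ X Y : k, η (Jk X) (Jk Y) = η X Y)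
    (hder : ∀ X Y : k, η (A X) Y + η X (A Y) = a * η X Y)
    (br : (ℝ × k × ℝ) → (ℝ × k × ℝ) → (ℝ × k × ℝ))
    (hbr : ∀ P Q : ℝ × k × ℝ, br P Q =
      (P.2.2 * (a * Q.1) - Q.2.2 * (a * P.1) - η P.2.1 Q.2.1,
       P.2.2 • A Q.2.1 - Q.2.2 • A P.2.1, 0))
    (J : (ℝ × k × ℝ) → (ℝ × k × ℝ))
    (hJ : ∀ P : ℝ × k × ℝ, J P = (-P.2.2, Jk P.2.1, P.1))
    (g ω : (ℝ × k × ℝ) → (ℝ × k × ℝ) → ℝ)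
    (hg : ∀ P Q : ℝ × k × ℝ, g P Q = P.1 * Q.1 + ⟪P.2.1, Q.2.1⟫ + P.2.2 * Q.2.2)
    (hω : ∀ P Q, ω P Q = g (J P) Q)
    (dω : (ℝ × k × ℝ) → (ℝ × k × ℝ) → (ℝ × k × ℝ) → ℝ)
    (hdω : ∀ P Q R, dω P Q R = -(ω (br P Q) R) - ω (br R P) Q - ω (br Q R) P)
    (σ : (ℝ × k × ℝ) → (ℝ × k × ℝ) → (ℝ × k × ℝ) → ℝ)
    (hσ : ∀ P Q R, σ P Q R = -(dω (J P) (J Q) (J R))) :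
    ((∀ P Q R S : ℝ × k × ℝ,
        -(σ (br P Q) R S) + σ (br P R) Q S - σ (br P S) Q R
          - σ (br Q R) P S + σ (br Q S) P R - σ (br R S) P Q = 0) ↔
      ((∀ X Y Z W : k,
          η X Y * η Z W - η X Z * η Y W + η X W * η Y Z
            + η Y Z * η X W - η Y W * η X Z + η Z W * η X Y
          = η X Y * (⟪Jk (A Z), W⟫ + ⟪Jk Z, A W⟫)
            - η X Z * (⟪Jk (A Y), W⟫ + ⟪Jk Y, A W⟫)
            + η X W * (⟪Jk (A Y), Z⟫ + ⟪Jk Y, A Z⟫)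
            + η Y Z * (⟪Jk (A X), W⟫ + ⟪Jk X, A W⟫)
            - η Y W * (⟪Jk (A X), Z⟫ + ⟪Jk X, A Z⟫)
            + η Z W * (⟪Jk (A X), Y⟫ + ⟪Jk X, A Y⟫)) ∧
        (∀ X Y : k,
          ⟪Jk ((a • A + A ∘ₗ A + (LinearMap.adjoint A) ∘ₗ A) X), Y⟫
            + ⟪Jk X, (a • A + A ∘ₗ A + (LinearMap.adjoint A) ∘ₗ A) Y⟫
          = 2 * a * η X Y)))
    ∧ ((∀ P Q R, dω P Q R = 0) ↔
        (∀ X Y : k, η X Y = ⟪Jk (A X), Y⟫ + ⟪Jk X, A Y⟫)) :=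
  stmt_3_general a A η Jk hη_alt hJk2 hJkorth hcomm h11 hder br hbr J hJ g ω hg hω dω hdω σ hσ
end

section
/- Let A be a skew-symmetric endomorphism of a 2m-dimensional Euclidean space (k₁, g) commuting with an orthogonal complex structure J on k₁, and let H be another skew-symmetric endomorphism of (k₁,g) commuting with J such that AᵗH + HA = 0 and H has rank 2 (equivalently, the 2-form η = g(H·,·) satisfies η∧η = 0 and η ≠ 0). Then A and H commute, and there exists a unitary basis e₂,…,e₂ₘ₊₁ of (k₁, J, g) with J e₂ₗ = e₂ₗ₊₁ in which A = diag(C_{b₁},…,C_{b_m}) and H = diag(C_{-c}, 0, …, 0) for some real b₁,…,b_m and nonzero c, where C_b denotes the 2×2 matrix with rows (0, b), (-b, 0). -/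
/-!
Since `A` is skew, `AᵗH + HA = 0` says `[A, H] = 0`, so `A` and `J` preserve the plane
`range H` and its orthogonal complement `ker H`. For a unit vector `f` of `range H` the plane is
`span {f, J f}`, and every skew operator preserving it maps `f` to a multiple of `J f`. On
`ker H` a unitary basis in which `A` is block diagonal is built inductively: `J A` is
symmetric, and for an eigenvector `f` of `J A` the plane `span {f, J f}` is invariant under `J`
and `A`, hence so is its orthogonal complement, on which one recurses.
-/

open scoped RealInnerProductSpace

open Module Submodule

section

variable {k : Type*} [NormedAddCommGroup k] [InnerProductSpace ℝ k]

theorem inner_apply_self_eq_zero_of_skew {T : k →ₗ[ℝ] k}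
    (hT : ∀ x y, ⟪T x, y⟫ = -⟪x, T y⟫) (x : k) : ⟪T x, x⟫ = 0 := by
  linarith [hT x x, real_inner_comm x (T x)]

theorem inner_map_eq_neg_inner_map_of_sq_eq_neg {J : k →ₗ[ℝ] k} (hJ2 : ∀ x, J (J x) = -x)
    (hJorth : ∀ x y, ⟪J x, J y⟫ = ⟪x, y⟫) (x y : k) : ⟪J x, y⟫ = -⟪x, J y⟫ := by
  rw [← hJorth x (J y), hJ2, inner_neg_right, neg_neg]

theorem inner_map_eq_neg_inner_map_of_adjoint_eq_neg [FiniteDimensional ℝ k] {T : k →ₗ[ℝ] k}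
    (hT : LinearMap.adjoint T = -T) (x y : k) : ⟪T x, y⟫ = -⟪x, T y⟫ := by
  rw [← LinearMap.adjoint_inner_left, hT, LinearMap.neg_apply, inner_neg_left, neg_neg,
    real_inner_comm]

theorem isSymmetric_comp_of_skew {S T : k →ₗ[ℝ] k}
    (hS : ∀ x y, ⟪S x, y⟫ = -⟪x, S y⟫) (hT : ∀ x y, ⟪T x, y⟫ = -⟪x, T y⟫)
    (hST : ∀ x, S (T x) = T (S x)) : (S ∘ₗ T).IsSymmetric := fun x y => by
  rw [LinearMap.comp_apply, LinearMap.comp_apply, hS, hT, neg_neg, hST]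

theorem orthogonal_mem_invtSubmodule_of_skew {T : k →ₗ[ℝ] k}
    (hT : ∀ x y, ⟪T x, y⟫ = -⟪x, T y⟫) {p : Submodule ℝ k}
    (hp : p ∈ Module.End.invtSubmodule T) : pᗮ ∈ Module.End.invtSubmodule T := fun x hx y hy => by
  rw [← neg_eq_zero, ← hT, hx (T y) (hp hy)]

theorem range_mem_invtSubmodule_of_commute {R M : Type*} [Semiring R] [AddCommMonoid M]
    [Module R M] {S T : M →ₗ[R] M} (hST : ∀ x, S (T x) = T (S x)) :
    T.range ∈ Module.End.invtSubmodule S := by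
  rintro _ ⟨y, rfl⟩
  exact ⟨S y, (hST y).symm⟩

theorem span_pair_mem_invtSubmodule {T : k →ₗ[ℝ] k} {f g : k}
    (hf : T f ∈ span ℝ {f, g}) (hg : T g ∈ span ℝ {f, g}) :
    span ℝ {f, g} ∈ Module.End.invtSubmodule T := by
  rw [Module.End.mem_invtSubmodule, span_le]
  rintro x (rfl | rfl)
  exacts [hf, hg]

def consPair {α : Type*} {n : ℕ} (f g : α) (e : Fin n × Bool → α) : Fin (n + 1) × Bool → α :=
  fun p => Fin.cases (cond p.2 g f) (fun j => e (j, p.2)) p.1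

@[simp] theorem consPair_zero_false {α : Type*} {n : ℕ} (f g : α) (e : Fin n × Bool → α) :
    consPair f g e (0, false) = f := rfl

@[simp] theorem consPair_zero_true {α : Type*} {n : ℕ} (f g : α) (e : Fin n × Bool → α) :
    consPair f g e (0, true) = g := rfl

@[simp] theorem consPair_succ {α : Type*} {n : ℕ} (f g : α) (e : Fin n × Bool → α)
    (j : Fin n) (b : Bool) : consPair f g e (j.succ, b) = e (j, b) := rfl

theorem orthonormal_pair_iff {f g : k} :
    Orthonormal ℝ ![f, g] ↔ ‖f‖ = 1 ∧ ‖g‖ = 1 ∧ ⟪f, g⟫ = 0 := by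
  refine ⟨fun h => ⟨h.1 0, h.1 1, h.2 (by decide : (0 : Fin 2) ≠ 1)⟩, fun ⟨hf, hg, hfg⟩ => ?_⟩
  have hgf : ⟪g, f⟫ = 0 := by rw [real_inner_comm, hfg]
  rw [orthonormal_iff_ite]
  intro i j
  fin_cases i <;> fin_cases j <;> simp [hf, hg, hfg, hgf]

theorem orthonormal_consPair {n : ℕ} {f g : k} {e : Fin n × Bool → k}
    (hfg : Orthonormal ℝ ![f, g]) (he : Orthonormal ℝ e)
    (he_perp : ∀ i, e i ∈ (span ℝ {f, g})ᗮ) : Orthonormal ℝ (consPair f g e) := by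
  have hf : ∀ i, ⟪f, e i⟫ = 0 := fun i =>
    inner_right_of_mem_orthogonal (subset_span (by simp)) (he_perp i)
  have hg : ∀ i, ⟪g, e i⟫ = 0 := fun i =>
    inner_right_of_mem_orthogonal (subset_span (by simp)) (he_perp i)
  have hf' : ∀ i, ⟪e i, f⟫ = 0 := fun i => by rw [real_inner_comm, hf]
  have hg' : ∀ i, ⟪e i, g⟫ = 0 := fun i => by rw [real_inner_comm, hg]
  obtain ⟨hf1, hg1, hfg0⟩ := orthonormal_pair_iff.mp hfg
  have hgf0 : ⟪g, f⟫ = 0 := by rw [real_inner_comm, hfg0]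
  rw [orthonormal_iff_ite] at he ⊢
  rintro ⟨i, b⟩ ⟨j, c⟩
  cases i using Fin.cases <;> cases j using Fin.cases <;> cases b <;> cases c <;>
    simp [hf, hg, hf', hg', he, hf1, hg1, hfg0, hgf0, (Fin.succ_ne_zero _).symm]

theorem finrank_span_pair_of_orthonormal {f g : k} (hfg : Orthonormal ℝ ![f, g]) :
    finrank ℝ (span ℝ {f, g}) = 2 := by
  rw [← Matrix.range_cons_cons_empty, finrank_span_eq_card hfg.linearIndependent,
    Fintype.card_fin]

theorem orthonormal_pair_J {J : k →ₗ[ℝ] k} (hJ2 : ∀ x, J (J x) = -x)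
    (hJ : ∀ x y, ⟪J x, y⟫ = -⟪x, J y⟫) {f : k} (hf : ‖f‖ = 1) : Orthonormal ℝ ![f, J f] := by
  refine orthonormal_pair_iff.mpr ⟨hf, ?_, ?_⟩
  · rw [← hf, norm_eq_sqrt_real_inner, norm_eq_sqrt_real_inner, hJ, hJ2, inner_neg_right,
      neg_neg]
  · rw [real_inner_comm, inner_apply_self_eq_zero_of_skew hJ]

theorem apply_J_eq_smul {J A : k →ₗ[ℝ] k} (hJ2 : ∀ x, J (J x) = -x)
    (hAJ : ∀ x, A (J x) = J (A x)) {f : k} {μ : ℝ} (hAf : A f = -μ • J f) :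
    A (J f) = μ • f := by
  rw [hAJ, hAf, map_smul, hJ2, smul_neg, neg_smul, neg_neg]

theorem span_pair_J_mem_invtSubmodule {J : k →ₗ[ℝ] k} (hJ2 : ∀ x, J (J x) = -x) (f : k) :
    span ℝ {f, J f} ∈ Module.End.invtSubmodule J :=
  span_pair_mem_invtSubmodule (subset_span (by simp))
    (by rw [hJ2]; exact neg_mem (subset_span (by simp)))

theorem span_pair_J_mem_invtSubmodule_of_apply_eq {J A : k →ₗ[ℝ] k}
    (hJ2 : ∀ x, J (J x) = -x) (hAJ : ∀ x, A (J x) = J (A x)) {f : k} {μ : ℝ}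
    (hAf : A f = -μ • J f) : span ℝ {f, J f} ∈ Module.End.invtSubmodule A :=
  span_pair_mem_invtSubmodule (by rw [hAf]; exact smul_mem _ _ (subset_span (by simp)))
    (by rw [apply_J_eq_smul hJ2 hAJ hAf]; exact smul_mem _ _ (subset_span (by simp)))

theorem exists_unit_apply_eq_neg_smul_J [FiniteDimensional ℝ k] {J A : k →ₗ[ℝ] k}
    (hJ2 : ∀ x, J (J x) = -x) (hJ : ∀ x y, ⟪J x, y⟫ = -⟪x, J y⟫)
    (hA : ∀ x y, ⟪A x, y⟫ = -⟪x, A y⟫) (hAJ : ∀ x, A (J x) = J (A x))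
    {W : Submodule ℝ k} (hJW : W ∈ Module.End.invtSubmodule J)
    (hAW : W ∈ Module.End.invtSubmodule A) (hW : finrank ℝ W ≠ 0) :
    ∃ f ∈ W, ‖f‖ = 1 ∧ ∃ μ : ℝ, A f = -μ • J f := by
  have hS := (isSymmetric_comp_of_skew hJ hA fun x => (hAJ x).symm).restrict_invariant
    (V := W) fun x hx => hJW (hAW hx)
  let i : Fin (finrank ℝ W) := ⟨0, Nat.pos_of_ne_zero hW⟩
  set v := hS.eigenvectorBasis rfl i
  refine ⟨v, v.2, (hS.eigenvectorBasis rfl).orthonormal.1 i, hS.eigenvalues rfl i, ?_⟩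
  have hJAv : J (A v) = hS.eigenvalues rfl i • (v : k) :=
    congrArg Subtype.val (hS.apply_eigenvectorBasis rfl i)
  rw [neg_smul, ← map_smul, ← hJAv, hJ2, neg_neg]

/-- On the real plane spanned by `e (l, false)` and `e (l, true) = J e (l, false)`, the
operator `A` acts by the matrix `C_{b l}` with rows `(0, b l)` and `(-b l, 0)`. -/
structure IsUnitaryNormalForm (J A : k →ₗ[ℝ] k) {n : ℕ} (e : Fin n × Bool → k)
    (b : Fin n → ℝ) : Prop where
  orthonormal : Orthonormal ℝ e
  J_apply : ∀ l, J (e (l, false)) = e (l, true)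
  A_apply_false : ∀ l, A (e (l, false)) = -b l • e (l, true)
  A_apply_true : ∀ l, A (e (l, true)) = b l • e (l, false)

theorem IsUnitaryNormalForm.cons {J A : k →ₗ[ℝ] k} {n : ℕ} {e : Fin n × Bool → k}
    {b : Fin n → ℝ} (he : IsUnitaryNormalForm J A e b) (hJ2 : ∀ x, J (J x) = -x)
    (hJ : ∀ x y, ⟪J x, y⟫ = -⟪x, J y⟫) (hAJ : ∀ x, A (J x) = J (A x)) {f : k}
    (hf : ‖f‖ = 1) {μ : ℝ} (hAf : A f = -μ • J f) (he_perp : ∀ i, e i ∈ (span ℝ {f, J f})ᗮ) :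
    IsUnitaryNormalForm J A (consPair f (J f) e) (Fin.cons μ b) where
  orthonormal := orthonormal_consPair (orthonormal_pair_J hJ2 hJ hf) he.orthonormal he_perp
  J_apply l := by
    cases l using Fin.cases
    exacts [rfl, he.J_apply _]
  A_apply_false l := by
    cases l using Fin.cases
    exacts [hAf, he.A_apply_false _]
  A_apply_true l := by
    cases l using Fin.cases
    exacts [apply_J_eq_smul hJ2 hAJ hAf, he.A_apply_true _]

theorem exists_isUnitaryNormalForm [FiniteDimensional ℝ k] {J A : k →ₗ[ℝ] k}
    (hJ2 : ∀ x, J (J x) = -x) (hJ : ∀ x y, ⟪J x, y⟫ = -⟪x, J y⟫)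
    (hA : ∀ x y, ⟪A x, y⟫ = -⟪x, A y⟫) (hAJ : ∀ x, A (J x) = J (A x))
    (n : ℕ) (W : Submodule ℝ k) (hW : finrank ℝ W = 2 * n)
    (hJW : W ∈ Module.End.invtSubmodule J) (hAW : W ∈ Module.End.invtSubmodule A) :
    ∃ (e : Fin n × Bool → k) (b : Fin n → ℝ), IsUnitaryNormalForm J A e b ∧ ∀ i, e i ∈ W := by
  induction n generalizing W with
  | zero =>
    exact ⟨isEmptyElim, isEmptyElim,
      ⟨⟨isEmptyElim, fun {i} => isEmptyElim i⟩, isEmptyElim, isEmptyElim, isEmptyElim⟩,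
      isEmptyElim⟩
  | succ n ih =>
    obtain ⟨f, hfW, hf, μ, hAf⟩ :=
      exists_unit_apply_eq_neg_smul_J hJ2 hJ hA hAJ hJW hAW (by omega)
    set U := span ℝ {f, J f}
    have hUW : U ≤ W := span_le.mpr <| by
      rintro x (rfl | rfl)
      exacts [hfW, hJW hfW]
    have hW' : finrank ℝ ↥(Uᗮ ⊓ W) = 2 * n := finrank_add_inf_finrank_orthogonal' hUW <| by
      rw [finrank_span_pair_of_orthonormal (orthonormal_pair_J hJ2 hJ hf), hW]
      ring
    obtain ⟨e, b, he, heW⟩ := ih (Uᗮ ⊓ W) hW'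
      (Module.End.invtSubmodule.inf_mem
        (orthogonal_mem_invtSubmodule_of_skew hJ (span_pair_J_mem_invtSubmodule hJ2 f)) hJW)
      (Module.End.invtSubmodule.inf_mem (orthogonal_mem_invtSubmodule_of_skew hA
        (span_pair_J_mem_invtSubmodule_of_apply_eq hJ2 hAJ hAf)) hAW)
    refine ⟨_, _, he.cons hJ2 hJ hAJ hf hAf fun i => (heW i).1, ?_⟩
    rintro ⟨l, c⟩
    cases l using Fin.cases
    · cases c
      exacts [hfW, hJW hfW]
    · exact (heW _).2

theorem exists_apply_eq_neg_smul_of_mem_span_pair {T : k →ₗ[ℝ] k}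
    (hT : ∀ x y, ⟪T x, y⟫ = -⟪x, T y⟫) {f g : k} (hfg : Orthonormal ℝ ![f, g])
    (hTf : T f ∈ span ℝ {f, g}) : ∃ μ : ℝ, T f = -μ • g := by
  obtain ⟨hf, -, hfg0⟩ := orthonormal_pair_iff.mp hfg
  obtain ⟨a, c, hac⟩ := mem_span_pair.mp hTf
  have ha : a = 0 := by
    have hfTf := inner_apply_self_eq_zero_of_skew hT f
    rw [real_inner_comm, ← hac, inner_add_right, real_inner_smul_right, real_inner_smul_right,
      real_inner_self_eq_norm_sq, hf, hfg0] at hfTf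
    simpa using hfTf
  exact ⟨-c, by rw [neg_neg, ← hac, ha, zero_smul, zero_add]⟩

theorem ker_eq_orthogonal_range_of_adjoint_eq_neg [FiniteDimensional ℝ k] {T : k →ₗ[ℝ] k}
    (hT : LinearMap.adjoint T = -T) : T.ker = T.rangeᗮ := by
  rw [← LinearMap.range_neg, ← hT, ← LinearMap.orthogonal_ker, orthogonal_orthogonal]

theorem apply_ne_zero_of_mem_range_of_adjoint_eq_neg [FiniteDimensional ℝ k] {T : k →ₗ[ℝ] k}
    (hT : LinearMap.adjoint T = -T) {x : k} (hx : x ∈ T.range) (hx0 : x ≠ 0) : T x ≠ 0 :=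
  fun h => hx0 <| disjoint_def.mp (orthogonal_disjoint T.range) x hx
    (ker_eq_orthogonal_range_of_adjoint_eq_neg hT ▸ h)

theorem exists_isUnitaryNormalForm_cons [FiniteDimensional ℝ k] {J A : k →ₗ[ℝ] k}
    (hJ2 : ∀ x, J (J x) = -x) (hJ : ∀ x y, ⟪J x, y⟫ = -⟪x, J y⟫)
    (hA : ∀ x y, ⟪A x, y⟫ = -⟪x, A y⟫) (hAJ : ∀ x, A (J x) = J (A x))
    {n : ℕ} (hk : finrank ℝ k = 2 * (n + 1)) {f : k} (hf : ‖f‖ = 1) {μ : ℝ}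
    (hAf : A f = -μ • J f) :
    ∃ (e : Fin n × Bool → k) (b : Fin n → ℝ),
      IsUnitaryNormalForm J A (consPair f (J f) e) (Fin.cons μ b) ∧
      ∀ i, e i ∈ (span ℝ {f, J f})ᗮ := by
  have hdim := (span ℝ {f, J f}).finrank_add_finrank_orthogonal
  rw [finrank_span_pair_of_orthonormal (orthonormal_pair_J hJ2 hJ hf), hk] at hdim
  obtain ⟨e, b, he, he_perp⟩ := exists_isUnitaryNormalForm hJ2 hJ hA hAJ n _ (by omega)
    (orthogonal_mem_invtSubmodule_of_skew hJ (span_pair_J_mem_invtSubmodule hJ2 f))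
    (orthogonal_mem_invtSubmodule_of_skew hA
      (span_pair_J_mem_invtSubmodule_of_apply_eq hJ2 hAJ hAf))
  exact ⟨e, b, he.cons hJ2 hJ hAJ hf hAf he_perp, he_perp⟩

theorem exists_span_pair_J_eq_range [FiniteDimensional ℝ k] {J H : k →ₗ[ℝ] k}
    (hJ2 : ∀ x, J (J x) = -x) (hJ : ∀ x y, ⟪J x, y⟫ = -⟪x, J y⟫)
    (hHJ : ∀ x, H (J x) = J (H x)) (hH : finrank ℝ H.range = 2) :
    ∃ f : k, ‖f‖ = 1 ∧ span ℝ {f, J f} = H.range := by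
  have : Nontrivial H.range := Module.nontrivial_of_finrank_pos (R := ℝ) (by omega)
  obtain ⟨⟨f, hf_range⟩, hf⟩ := exists_norm_eq H.range zero_le_one
  replace hf : ‖f‖ = 1 := hf
  have hf_pair := orthonormal_pair_J hJ2 hJ hf
  refine ⟨f, hf, eq_of_le_of_finrank_eq (span_le.mpr ?_)
    (by rw [finrank_span_pair_of_orthonormal hf_pair, hH])⟩
  rintro x (rfl | rfl)
  exacts [hf_range, range_mem_invtSubmodule_of_commute (fun x => (hHJ x).symm) hf_range]

end

/-- Simultaneous normal form for a skew-symmetric `A` commuting with `J` and a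
rank-2 skew-symmetric `H` commuting with `J` with `AᵗH + HA = 0`. -/
theorem stmt_5 {k : Type*} [NormedAddCommGroup k] [InnerProductSpace ℝ k]
    [FiniteDimensional ℝ k]
    (m : ℕ) (hdim : Module.finrank ℝ k = 2 * m)
    (J A H : k →ₗ[ℝ] k)
    (hJ2 : ∀ x, J (J x) = -x)
    (hJorth : ∀ x y : k, ⟪J x, J y⟫ = ⟪x, y⟫)
    (hAskew : LinearMap.adjoint A = -A)
    (hAJ : A ∘ₗ J = J ∘ₗ A)
    (hHskew : LinearMap.adjoint H = -H)
    (hHJ : H ∘ₗ J = J ∘ₗ H)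
    (hAH : (LinearMap.adjoint A) ∘ₗ H + H ∘ₗ A = 0)
    (hrank : Module.finrank ℝ (LinearMap.range H) = 2) :
    A ∘ₗ H = H ∘ₗ A ∧
    ∃ e : Module.Basis (Fin m × Bool) ℝ k, Orthonormal ℝ e ∧
      (∀ l : Fin m, J (e (l, false)) = e (l, true)) ∧
      (∃ bv : Fin m → ℝ, ∀ l : Fin m,
        A (e (l, false)) = -(bv l) • e (l, true) ∧
        A (e (l, true)) = bv l • e (l, false)) ∧
      (∃ (c : ℝ) (i₀ : Fin m), c ≠ 0 ∧
        H (e (i₀, false)) = c • e (i₀, true) ∧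
        H (e (i₀, true)) = -c • e (i₀, false) ∧
        ∀ l : Fin m, l ≠ i₀ → H (e (l, false)) = 0 ∧ H (e (l, true)) = 0) := by
  have hJ := inner_map_eq_neg_inner_map_of_sq_eq_neg hJ2 hJorth
  have hA := inner_map_eq_neg_inner_map_of_adjoint_eq_neg hAskew
  have hAJx (x : k) : A (J x) = J (A x) := LinearMap.congr_fun hAJ x
  have hHJx (x : k) : H (J x) = J (H x) := LinearMap.congr_fun hHJ x
  have hAH_comm : A ∘ₗ H = H ∘ₗ A := by
    rwa [hAskew, LinearMap.neg_comp, neg_add_eq_zero] at hAH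
  refine ⟨hAH_comm, ?_⟩
  obtain ⟨f, hf, hspan⟩ := exists_span_pair_J_eq_range hJ2 hJ hHJx hrank
  have hf_pair := orthonormal_pair_J hJ2 hJ hf
  have hf_range : f ∈ H.range := hspan ▸ subset_span (Set.mem_insert f _)
  obtain ⟨μ, hAf⟩ := exists_apply_eq_neg_smul_of_mem_span_pair hA hf_pair <| hspan ▸
    range_mem_invtSubmodule_of_commute (fun x => LinearMap.congr_fun hAH_comm x) hf_range
  obtain ⟨ν, hHf⟩ := exists_apply_eq_neg_smul_of_mem_span_pair
    (inner_map_eq_neg_inner_map_of_adjoint_eq_neg hHskew) hf_pair (hspan ▸ ⟨f, rfl⟩)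
  have hν : ν ≠ 0 := by
    rintro rfl
    refine apply_ne_zero_of_mem_range_of_adjoint_eq_neg hHskew hf_range ?_ (by simpa using hHf)
    exact norm_ne_zero_iff.mp (by rw [hf]; exact one_ne_zero)
  obtain ⟨m, rfl⟩ : ∃ m', m = m' + 1 := Nat.exists_eq_add_one.mpr (by
    have := H.finrank_range_add_finrank_ker; omega)
  obtain ⟨e, b, hN, he_perp⟩ := exists_isUnitaryNormalForm_cons hJ2 hJ hA hAJx hdim hf hAf
  refine ⟨basisOfOrthonormalOfCardEqFinrank hN.orthonormal (by simp [hdim, mul_comm]), ?_⟩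
  rw [coe_basisOfOrthonormalOfCardEqFinrank]
  refine ⟨hN.orthonormal, hN.J_apply, ⟨_, fun l => ⟨hN.A_apply_false l, hN.A_apply_true l⟩⟩,
    -ν, 0, neg_ne_zero.mpr hν, hHf, by rw [neg_neg]; exact apply_J_eq_smul hJ2 hHJx hHf, ?_⟩
  intro l hl
  obtain ⟨j, rfl⟩ := Fin.exists_succ_eq.mpr hl
  have he_ker : ∀ i, e i ∈ H.ker := by
    rwa [ker_eq_orthogonal_range_of_adjoint_eq_neg hHskew, ← hspan]
  exact ⟨he_ker _, he_ker _⟩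
end

section
/- Let g be the 2n-dimensional Lie algebra with basis f₁,…,f₂ₙ and structure equations df¹ = f²∧f³, df² = -f²∧f^{2n}, df³ = f³∧f^{2n}, df^{2l+2} = b_l f^{2l+3}∧f^{2n}, df^{2l+3} = -b_l f^{2l+2}∧f^{2n} for 1 ≤ l ≤ n-2, df^{2n} = 0 (b_l ∈ ℝ). Then g admits no symplectic form: every closed 2-form Ω on g satisfies ι_{f₁}Ω = 0, hence is degenerate. -/
/-!
`f₁` is central and equals `-[f₂, f₃]`, so closedness of `Ω` expresses `Ω(f₁, z)` through
brackets with `f₂` and `f₃`. These vanish for `z ∉ {f₂, f₃, f₂ₙ}`; for `z = f₂, f₃`, which are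
eigenvectors of `ad f₂ₙ` with eigenvalues `∓1`, closedness on `(f₂ₙ, z, f₁)` gives `Ω(z, f₁) = 0`;
and for `z = f₂ₙ` the two eigenvalues cancel.
-/

noncomputable section

/-- Extension of a `Fin n`-indexed vector by zero to `ℕ`. -/
def ext8 (n : ℕ) (x : Fin n → ℝ) : ℕ → ℝ := fun i => if h : i < n then x ⟨i, h⟩ else 0

/-- Bracket with `[f₂,f₃] = -f₁`, `[f₂ₙ,f₂] = -f₂`, `[f₂ₙ,f₃] = f₃`,
`[f₂ₙ,f_{2l+2}] = b_l f_{2l+3}`, `[f₂ₙ,f_{2l+3}] = -b_l f_{2l+2}` (0-based indices). -/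
def br8 (n : ℕ) (b : ℕ → ℝ) (x y : Fin (2*n) → ℝ) : Fin (2*n) → ℝ := fun k =>
  let X := ext8 (2*n) x
  let Y := ext8 (2*n) y
  let w := fun i : ℕ => X (2*n-1) * Y i - X i * Y (2*n-1)
  if (k : ℕ) = 0 then -(X 1 * Y 2 - X 2 * Y 1)
  else if (k : ℕ) = 1 then -(w 1)
  else if (k : ℕ) = 2 then w 2
  else if (k : ℕ) = 2*n-1 then 0
  else if (k : ℕ) % 2 = 1 then -(b (((k : ℕ) - 1)/2)) * w ((k : ℕ) + 1)
  else b ((k : ℕ)/2 - 1) * w ((k : ℕ) - 1)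

section ClosedForm

variable {K V : Type*} [Field K] [AddCommGroup V] [Module K V]

def IsClosedForm (br : V → V → V) (Ω : V →ₗ[K] V →ₗ[K] K) : Prop :=
  ∀ x y z, Ω (br x y) z + Ω (br z x) y + Ω (br y z) x = 0

variable {br : V → V → V} {Ω : V →ₗ[K] V →ₗ[K] K}

theorem IsClosedForm.apply_bracket_eq_zero (hΩ : IsClosedForm br Ω) {u v z : V}
    (hzu : br z u = 0) (hvz : br v z = 0) : Ω (br u v) z = 0 := by
  simpa [hzu, hvz] using hΩ u v z

theorem IsClosedForm.apply_eigenvector_eq_zero (hΩ : IsClosedForm br Ω) {c h w : V} {μ : K}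
    (hch : br c h = 0) (hwc : br w c = 0) (hw : br h w = μ • w) (hμ : μ ≠ 0) :
    Ω w c = 0 := by
  have := hΩ h w c
  simp only [hch, hwc, hw, map_zero, LinearMap.zero_apply, add_zero, map_smul,
    LinearMap.smul_apply, smul_eq_mul] at this
  exact (mul_eq_zero.mp this).resolve_left hμ

theorem IsClosedForm.apply_bracket_eigenvectors (hΩ : IsClosedForm br Ω)
    (hbr : ∀ x y, br x y = -br y x) (halt : ∀ x y, Ω x y = -Ω y x) {u v h : V} {α β : K}
    (hu : br h u = α • u) (hv : br h v = β • v) :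
    Ω (br u v) h = -(α + β) * Ω u v := by
  have := hΩ u v h
  rw [hbr v h, hu, hv, halt (-(β • v)) u] at this
  simp only [map_smul, map_neg, LinearMap.smul_apply, smul_eq_mul] at this
  linear_combination this

end ClosedForm

def basisVec (N j : ℕ) : Fin N → ℝ := fun i => if (i : ℕ) = j then 1 else 0

lemma ext8_basisVec {N j : ℕ} (hj : j < N) :
    ext8 N (basisVec N j) = fun i => if i = j then (1 : ℝ) else 0 := by
  funext i
  unfold ext8 basisVec
  split
  · simp
  · rw [if_neg]; omega

lemma Pi.basisFun_apply_eq_basisVec {N : ℕ} (i : Fin N) :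
    Pi.basisFun ℝ (Fin N) i = basisVec N i := by
  funext j
  simp [basisVec, Pi.single_apply, Fin.val_eq_val, eq_comm]

lemma basisVec_ne_zero {N j : ℕ} (hj : j < N) : basisVec N j ≠ 0 := fun h => by
  simpa [basisVec] using congrFun h ⟨j, hj⟩

section Bracket

variable {n : ℕ} (b : ℕ → ℝ)

lemma br8_antisymm (x y : Fin (2*n) → ℝ) : br8 n b x y = -br8 n b y x := by
  funext k
  simp only [br8, Pi.neg_apply]
  split_ifs <;> ring

lemma br8_basisVec_zero_right (hn : 2 ≤ n) (x : Fin (2*n) → ℝ) :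
    br8 n b x (basisVec (2*n) 0) = 0 := by
  funext k
  simp only [br8, ext8_basisVec (show 0 < 2*n by omega), Pi.zero_apply]
  split_ifs <;> (try omega) <;> simp_all

lemma br8_basisVec_zero_left (hn : 2 ≤ n) (x : Fin (2*n) → ℝ) :
    br8 n b (basisVec (2*n) 0) x = 0 := by
  rw [br8_antisymm, br8_basisVec_zero_right b hn, neg_zero]

lemma br8_basisVec_one_two (hn : 2 ≤ n) :
    br8 n b (basisVec (2*n) 1) (basisVec (2*n) 2) = -basisVec (2*n) 0 := by
  funext k
  simp only [br8, ext8_basisVec (show 1 < 2*n by omega), ext8_basisVec (show 2 < 2*n by omega),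
    Pi.neg_apply, basisVec]
  split_ifs <;> (try omega) <;> simp_all

lemma br8_basisVec_top_one (hn : 2 ≤ n) :
    br8 n b (basisVec (2*n) (2*n-1)) (basisVec (2*n) 1) = (-1 : ℝ) • basisVec (2*n) 1 := by
  funext k
  simp only [br8, ext8_basisVec (show 2*n-1 < 2*n by omega),
    ext8_basisVec (show 1 < 2*n by omega), Pi.smul_apply, basisVec]
  split_ifs <;> (try omega) <;> simp_all

lemma br8_basisVec_top_two (hn : 2 ≤ n) :
    br8 n b (basisVec (2*n) (2*n-1)) (basisVec (2*n) 2) = (1 : ℝ) • basisVec (2*n) 2 := by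
  funext k
  simp only [br8, ext8_basisVec (show 2*n-1 < 2*n by omega),
    ext8_basisVec (show 2 < 2*n by omega), Pi.smul_apply, basisVec]
  split_ifs <;> (try omega) <;> simp_all

lemma br8_basisVec_one_eq_zero (hn : 2 ≤ n) {j : ℕ} (hj : j < 2*n) (h2 : j ≠ 2)
    (htop : j ≠ 2*n-1) : br8 n b (basisVec (2*n) j) (basisVec (2*n) 1) = 0 := by
  funext k
  simp only [br8, ext8_basisVec hj, ext8_basisVec (show 1 < 2*n by omega), Pi.zero_apply]
  split_ifs <;> (try omega) <;> simp_all

lemma br8_two_basisVec_eq_zero (hn : 2 ≤ n) {j : ℕ} (hj : j < 2*n) (h1 : j ≠ 1)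
    (htop : j ≠ 2*n-1) : br8 n b (basisVec (2*n) 2) (basisVec (2*n) j) = 0 := by
  funext k
  simp only [br8, ext8_basisVec hj, ext8_basisVec (show 2 < 2*n by omega), Pi.zero_apply]
  split_ifs <;> (try omega) <;> simp_all

end Bracket

theorem IsClosedForm.br8_apply_basisVec_zero {n : ℕ} (hn : 2 ≤ n) {b : ℕ → ℝ}
    {Ω : (Fin (2*n) → ℝ) →ₗ[ℝ] (Fin (2*n) → ℝ) →ₗ[ℝ] ℝ}
    (halt : ∀ x y, Ω x y = -Ω y x) (hΩ : IsClosedForm (br8 n b) Ω) {j : ℕ} (hj : j < 2*n) :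
    Ω (basisVec (2*n) 0) (basisVec (2*n) j) = 0 := by
  have hf₁ : basisVec (2*n) 0 = -br8 n b (basisVec (2*n) 1) (basisVec (2*n) 2) := by
    rw [br8_basisVec_one_two b hn, neg_neg]
  have htop : 2*n-1 < 2*n := by omega
  by_cases h1 : j = 1
  · subst h1
    rw [halt, hΩ.apply_eigenvector_eq_zero (br8_basisVec_zero_left b hn _)
      (br8_basisVec_zero_right b hn _) (br8_basisVec_top_one b hn) (by norm_num), neg_zero]
  by_cases h2 : j = 2
  · subst h2
    rw [halt, hΩ.apply_eigenvector_eq_zero (br8_basisVec_zero_left b hn _)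
      (br8_basisVec_zero_right b hn _) (br8_basisVec_top_two b hn) one_ne_zero, neg_zero]
  rw [hf₁, map_neg, LinearMap.neg_apply, neg_eq_zero]
  by_cases ht : j = 2*n-1
  · subst ht
    rw [hΩ.apply_bracket_eigenvectors (br8_antisymm b) halt (br8_basisVec_top_one b hn)
      (br8_basisVec_top_two b hn)]
    ring
  · exact hΩ.apply_bracket_eq_zero (br8_basisVec_one_eq_zero b hn hj h2 ht)
      (br8_two_basisVec_eq_zero b hn hj h1 ht)

/-- The Lie algebra with structure equations
`df¹ = f²∧f³`, `df² = -f²∧f^{2n}`, `df³ = f³∧f^{2n}`,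
`df^{2l+2} = b_l f^{2l+3}∧f^{2n}`, `df^{2l+3} = -b_l f^{2l+2}∧f^{2n}`, `df^{2n} = 0`
admits no symplectic form: every closed 2-form `Ω` satisfies `ι_{f₁}Ω = 0`,
hence is degenerate. -/
theorem stmt_8 (n : ℕ) (hn : 2 ≤ n) (b : ℕ → ℝ)
    (Ω : (Fin (2*n) → ℝ) →ₗ[ℝ] (Fin (2*n) → ℝ) →ₗ[ℝ] ℝ)
    (halt : ∀ x y, Ω x y = - Ω y x)
    (hclosed : ∀ x y z,
      Ω (br8 n b x y) z + Ω (br8 n b z x) y + Ω (br8 n b y z) x = 0) :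
    (∀ y, Ω (fun i => if (i : ℕ) = 0 then (1:ℝ) else 0) y = 0) ∧
    ∃ x : Fin (2*n) → ℝ, x ≠ 0 ∧ ∀ y, Ω x y = 0 := by
  have hf₁ : Ω (basisVec (2*n) 0) = 0 := (Pi.basisFun ℝ (Fin (2*n))).ext fun i => by
    rw [Pi.basisFun_apply_eq_basisVec, LinearMap.zero_apply]
    exact IsClosedForm.br8_apply_basisVec_zero hn halt hclosed i.isLt
  have hker : ∀ y, Ω (basisVec (2*n) 0) y = 0 := fun y => by rw [hf₁, LinearMap.zero_apply]
  exact ⟨hker, basisVec (2*n) 0, basisVec_ne_zero (by omega), hker⟩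

end
end

section
/- Let (h, k, r, b, c, p, q) satisfy h = (1/4)((c²+p²+q²)² + (1/2)b²(p²+q²)) and k = (1/2)(c²+p²+q² + b²/2), and consider the ODE system: b' = -h b, c' = -3h c, p' = -(k b² + 3h) p, q' = -(k b² + 3h) q with initial data (b₀,c₀,p₀,q₀). Then along any solution, b², c², p², q² are non-increasing, the solution exists for all positive times, and c(t)² + p(t)² + q(t)² ≤ x(t) where x solves x' = -(3/2)x³, x(0) = c₀²+p₀²+q₀²; in particular c, p, q → 0 as t → ∞. -/
open Filter

noncomputable section

def hval (B C P Q : ℝ) : ℝ := (1/4) * ((C^2 + P^2 + Q^2)^2 + (1/2) * B^2 * (P^2 + Q^2))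

def kval (B C P Q : ℝ) : ℝ := (1/2) * (C^2 + P^2 + Q^2 + B^2/2)

/-- The ODE system is satisfied on `[0,∞)` by the quadruple `(b,c,p,q)`. -/
def IsSol (b c p q : ℝ → ℝ) : Prop :=
  ∀ t ∈ Set.Ici (0:ℝ),
    HasDerivAt b (-(hval (b t) (c t) (p t) (q t)) * b t) t ∧
    HasDerivAt c (-3 * hval (b t) (c t) (p t) (q t) * c t) t ∧
    HasDerivAt p (-(kval (b t) (c t) (p t) (q t) * (b t)^2
      + 3 * hval (b t) (c t) (p t) (q t)) * p t) t ∧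
    HasDerivAt q (-(kval (b t) (c t) (p t) (q t) * (b t)^2
      + 3 * hval (b t) (c t) (p t) (q t)) * q t) t

section Stmt18Aux
open Set Metric

abbrev EE := ℝ × ℝ × ℝ × ℝ

def Fv (y : EE) : EE :=
  (-(hval y.1 y.2.1 y.2.2.1 y.2.2.2) * y.1,
   -3 * hval y.1 y.2.1 y.2.2.1 y.2.2.2 * y.2.1,
   -(kval y.1 y.2.1 y.2.2.1 y.2.2.2 * y.1^2 + 3 * hval y.1 y.2.1 y.2.2.1 y.2.2.2) * y.2.2.1,
   -(kval y.1 y.2.1 y.2.2.1 y.2.2.2 * y.1^2 + 3 * hval y.1 y.2.1 y.2.2.1 y.2.2.2) * y.2.2.2)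

lemma contDiff_Fv : ContDiff ℝ 1 Fv := by
  have h : Fv = fun y : EE =>
      ((-(1/4) * ((y.2.1^2 + y.2.2.1^2 + y.2.2.2^2)^2 + (1/2) * y.1^2 * (y.2.2.1^2 + y.2.2.2^2))) * y.1,
       (-3 * ((1/4) * ((y.2.1^2 + y.2.2.1^2 + y.2.2.2^2)^2 + (1/2) * y.1^2 * (y.2.2.1^2 + y.2.2.2^2)))) * y.2.1,
       (-((1/2) * (y.2.1^2 + y.2.2.1^2 + y.2.2.2^2 + (1/2) * y.1^2) * y.1^2 +
          3 * ((1/4) * ((y.2.1^2 + y.2.2.1^2 + y.2.2.2^2)^2 + (1/2) * y.1^2 * (y.2.2.1^2 + y.2.2.2^2))))) * y.2.2.1,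
       (-((1/2) * (y.2.1^2 + y.2.2.1^2 + y.2.2.2^2 + (1/2) * y.1^2) * y.1^2 +
          3 * ((1/4) * ((y.2.1^2 + y.2.2.1^2 + y.2.2.2^2)^2 + (1/2) * y.1^2 * (y.2.2.1^2 + y.2.2.2^2))))) * y.2.2.2) := by
    funext y
    simp only [Fv, hval, kval, Prod.mk.injEq]
    refine ⟨by ring, trivial, by ring, by ring⟩
  rw [h]
  fun_prop

/-- Uniform-step local existence for starting points in the ball of radius `M`. -/
lemma uniform_step (M : ℝ) (hM : 0 ≤ M) :
    ∃ ε > (0:ℝ), ∀ (t₀ : ℝ) (y : EE), ‖y‖ ≤ M →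
      ∃ f : ℝ → EE, f t₀ = y ∧
        ∀ t ∈ Icc (t₀ - ε) (t₀ + ε), HasDerivWithinAt f (Fv (f t)) (Icc (t₀ - ε) (t₀ + ε)) t := by
  set S : Set EE := closedBall 0 (2*M+1) with hS
  have hScomp : IsCompact S := isCompact_closedBall _ _
  have hSne : S.Nonempty := ⟨0, by simp [hS]; positivity⟩
  -- bound on the vector field
  obtain ⟨z, _, hz⟩ := hScomp.exists_isMaxOn hSne (contDiff_Fv.continuous.norm.continuousOn)
  set C : ℝ := max ‖Fv z‖ 0 with hC
  have hC0 : 0 ≤ C := le_max_right _ _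
  have hCb : ∀ x ∈ S, ‖Fv x‖ ≤ C := fun x hx => le_trans (hz hx : ‖Fv x‖ ≤ ‖Fv z‖) (le_max_left _ _)
  -- Lipschitz constant on S
  obtain ⟨w, _, hw⟩ := hScomp.exists_isMaxOn hSne
    ((contDiff_Fv.continuous_fderiv one_ne_zero).norm.continuousOn)
  set L : NNReal := ‖fderiv ℝ Fv w‖₊ with hL
  have hlip : LipschitzOnWith L Fv S := by
    apply (convex_closedBall _ _).lipschitzOnWith_of_nnnorm_fderiv_le
      (fun x _ => contDiff_Fv.differentiable one_ne_zero x)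
    intro x hx
    exact (hw hx : ‖fderiv ℝ Fv x‖ ≤ ‖fderiv ℝ Fv w‖)
  set ε : ℝ := (M+1)/(C+1) with hε
  have hε0 : 0 < ε := by positivity
  refine ⟨ε, hε0, fun t₀ y hy => ?_⟩
  have hball : closedBall y (M+1) ⊆ S := by
    intro x hx
    simp only [hS, mem_closedBall, dist_zero_right] at *
    have h2 : ‖x - y‖ ≤ M + 1 := by rwa [← dist_eq_norm]
    calc ‖x‖ = ‖(x - y) + y‖ := by ring_nf
    _ ≤ ‖x - y‖ + ‖y‖ := norm_add_le _ _
    _ ≤ (M+1) + M := add_le_add h2 hy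
    _ ≤ 2*M+1 := by linarith
  have hpl : IsPicardLindelof (fun _ => Fv) (tmin := t₀ - ε) (tmax := t₀ + ε)
      ⟨t₀, by constructor <;> linarith⟩ y ⟨M+1, by linarith⟩ 0 ⟨C, hC0⟩ L :=
    { lipschitzOnWith := fun t _ => hlip.mono hball
      continuousOn := fun x _ => continuousOn_const
      norm_le := fun t _ x hx => hCb x (hball hx)
      mul_max_le := by
        show C * max (t₀ + ε - t₀) (t₀ - (t₀ - ε)) ≤ (M+1) - ((0:NNReal):ℝ)
        rw [NNReal.coe_zero, sub_zero]
        have h1 : max (t₀ + ε - t₀) (t₀ - (t₀ - ε)) = ε := by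
          rw [show t₀ + ε - t₀ = ε by ring, show t₀ - (t₀ - ε) = ε by ring, max_self]
        rw [h1, hε]
        have hC1 : C/(C+1) ≤ 1 := by rw [div_le_one (by linarith)]; linarith
        calc C * ((M+1)/(C+1)) = (M+1) * (C/(C+1)) := by ring
        _ ≤ (M+1) * 1 := mul_le_mul_of_nonneg_left hC1 (by linarith)
        _ = M+1 := mul_one _ }
  obtain ⟨f, hf0, hf⟩ := hpl.exists_eq_forall_mem_Icc_hasDerivWithinAt₀
  exact ⟨f, hf0, fun t ht => by simpa using hf t ht⟩

/-- Scalar fencing: if `f' = g·f` with `g ≤ 0` on `[s,t]` then `f t ^ 2 ≤ f s ^ 2`. -/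
lemma sq_anti {f g : ℝ → ℝ} {s t : ℝ} (hst : s ≤ t)
    (hc : ContinuousOn f (Icc s t))
    (hd : ∀ x ∈ Ico s t, HasDerivWithinAt f (g x * f x) (Ici x) x)
    (hg : ∀ x ∈ Ico s t, g x ≤ 0) : (f t)^2 ≤ (f s)^2 := by
  have key := image_le_of_deriv_right_le_deriv_boundary
    (f := fun u => f u ^ 2) (f' := fun x => 2 * f x ^ 1 * (g x * f x))
    (B := fun _ : ℝ => (f s)^2) (B' := fun _ => 0) (a := s) (b := t)
    (hc.pow 2) (fun x hx => (hd x hx).pow 2) (le_refl _) continuousOn_const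
    (fun x _ => hasDerivWithinAt_const _ _ _)
    (fun x hx => by
      have h1 := hg x hx
      have h2 : (2:ℝ) * f x ^ 1 * (g x * f x) = 2 * g x * (f x)^2 := by ring
      simp only [h2]
      nlinarith [sq_nonneg (f x)])
  exact key ⟨hst, le_rfl⟩

lemma hval_nonneg (B C P Q : ℝ) : 0 ≤ hval B C P Q := by unfold hval; positivity

lemma kval_nonneg (B C P Q : ℝ) : 0 ≤ kval B C P Q := by unfold kval; positivity

lemma abs_le_abs_of_sq {a b : ℝ} (h : a^2 ≤ b^2) : |a| ≤ |b| := by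
  have := abs_le_of_sq_le_sq' (by rwa [sq_abs] : a^2 ≤ |b|^2) (abs_nonneg b)
  exact abs_le.mpr this


lemma proj_deriv {f : ℝ → EE} {d : EE} {s : Set ℝ} {x : ℝ} (h : HasDerivWithinAt f d s x) :
    HasDerivWithinAt (fun u => (f u).1) d.1 s x ∧
    HasDerivWithinAt (fun u => (f u).2.1) d.2.1 s x ∧
    HasDerivWithinAt (fun u => (f u).2.2.1) d.2.2.1 s x ∧
    HasDerivWithinAt (fun u => (f u).2.2.2) d.2.2.2 s x := by
  have h2 : HasDerivWithinAt (fun u => (f u).2) d.2 s x := by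
    simpa [Function.comp_def] using (hasFDerivAt_snd (𝕜 := ℝ) (p := f x)).comp_hasDerivWithinAt x h
  have h22 : HasDerivWithinAt (fun u => (f u).2.2) d.2.2 s x := by
    simpa [Function.comp_def] using
      (hasFDerivAt_snd (𝕜 := ℝ) (p := (f x).2)).comp_hasDerivWithinAt x h2
  refine ⟨?_, ?_, ?_, ?_⟩
  · simpa [Function.comp_def] using (hasFDerivAt_fst (𝕜 := ℝ) (p := f x)).comp_hasDerivWithinAt x h
  · simpa [Function.comp_def] using
      (hasFDerivAt_fst (𝕜 := ℝ) (p := (f x).2)).comp_hasDerivWithinAt x h2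
  · simpa [Function.comp_def] using
      (hasFDerivAt_fst (𝕜 := ℝ) (p := (f x).2.2)).comp_hasDerivWithinAt x h22
  · simpa [Function.comp_def] using
      (hasFDerivAt_snd (𝕜 := ℝ) (p := (f x).2.2)).comp_hasDerivWithinAt x h22

/-- On forward time intervals, the sup-norm of a partial solution is non-increasing
(from `0`). -/
lemma invariance {f : ℝ → EE} {a T : ℝ} (ha : a ≤ 0) (hT : 0 ≤ T)
    (hf : ∀ t ∈ Icc a T, HasDerivWithinAt f (Fv (f t)) (Icc a T) t) :
    ∀ t ∈ Icc (0:ℝ) T, ‖f t‖ ≤ ‖f 0‖ := by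
  have hcont : ContinuousOn f (Icc a T) := fun u hu => (hf u hu).continuousWithinAt
  intro t ht
  have hsub : Icc (0:ℝ) t ⊆ Icc a T := Icc_subset_Icc ha ht.2
  have hIci : ∀ x ∈ Ico (0:ℝ) t, HasDerivWithinAt f (Fv (f x)) (Ici x) x := fun x hx =>
    (hf x ⟨le_trans ha hx.1, le_trans hx.2.le ht.2⟩).mono_of_mem_nhdsWithin
      (Icc_mem_nhdsGE_of_mem ⟨le_trans ha hx.1, lt_of_lt_of_le hx.2 ht.2⟩)
  have key : ∀ (proj : EE → ℝ) (g : EE → ℝ),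
      ContinuousOn (fun u => proj (f u)) (Icc 0 t) →
      (∀ (d : EE) (s : Set ℝ) (x : ℝ), HasDerivWithinAt f d s x →
        HasDerivWithinAt (fun u => proj (f u)) (proj d) s x) →
      (∀ y : EE, proj (Fv y) = g y * proj y) → (∀ y : EE, g y ≤ 0) →
      (proj (f t))^2 ≤ (proj (f 0))^2 := by
    intro proj g hcproj hproj hfg hgle
    apply sq_anti (g := fun x => g (f x)) ht.1 hcproj
    · intro x hx
      have := hproj _ _ _ (hIci x hx)
      rwa [hfg] at this
    · exact fun x _ => hgle (f x)
  have h1 := key (fun y => y.1) (fun y => -(hval y.1 y.2.1 y.2.2.1 y.2.2.2))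
    ((hcont.mono hsub).fst) (fun d s x h => (proj_deriv h).1)
    (fun y => by simp [Fv]) (fun y => by simpa using hval_nonneg y.1 y.2.1 y.2.2.1 y.2.2.2)
  have h2 := key (fun y => y.2.1) (fun y => -3 * hval y.1 y.2.1 y.2.2.1 y.2.2.2)
    ((hcont.mono hsub).snd.fst) (fun d s x h => (proj_deriv h).2.1)
    (fun y => by simp [Fv])
    (fun y => by nlinarith [hval_nonneg y.1 y.2.1 y.2.2.1 y.2.2.2])
  have h3 := key (fun y => y.2.2.1)
    (fun y => -(kval y.1 y.2.1 y.2.2.1 y.2.2.2 * y.1^2 + 3 * hval y.1 y.2.1 y.2.2.1 y.2.2.2))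
    ((hcont.mono hsub).snd.snd.fst) (fun d s x h => (proj_deriv h).2.2.1)
    (fun y => by simp [Fv])
    (fun y => by nlinarith [hval_nonneg y.1 y.2.1 y.2.2.1 y.2.2.2,
      kval_nonneg y.1 y.2.1 y.2.2.1 y.2.2.2, sq_nonneg y.1])
  have h4 := key (fun y => y.2.2.2)
    (fun y => -(kval y.1 y.2.1 y.2.2.1 y.2.2.2 * y.1^2 + 3 * hval y.1 y.2.1 y.2.2.1 y.2.2.2))
    ((hcont.mono hsub).snd.snd.snd) (fun d s x h => (proj_deriv h).2.2.2)
    (fun y => by simp [Fv])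
    (fun y => by nlinarith [hval_nonneg y.1 y.2.1 y.2.2.1 y.2.2.2,
      kval_nonneg y.1 y.2.1 y.2.2.1 y.2.2.2, sq_nonneg y.1])
  simp only [Prod.norm_def, Real.norm_eq_abs]
  exact max_le_max (abs_le_abs_of_sq h1)
    (max_le_max (abs_le_abs_of_sq h2) (max_le_max (abs_le_abs_of_sq h3) (abs_le_abs_of_sq h4)))

def Qprop (x₀ : EE) (ε : ℝ) (n : ℕ) (f : ℝ → EE) : Prop := f 0 = x₀ ∧
  ∀ t ∈ Icc (-ε) ((n:ℝ)*ε + ε), HasDerivWithinAt f (Fv (f t)) (Icc (-ε) ((n:ℝ)*ε+ε)) t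

lemma exists_global (x₀ : EE) :
    ∃ f : ℝ → EE, f 0 = x₀ ∧ ∀ t ∈ Ici (0:ℝ), HasDerivAt f (Fv (f t)) t := by
  obtain ⟨ε, hε0, step⟩ := uniform_step ‖x₀‖ (norm_nonneg _)
  -- base case
  have base : ∃ f, Qprop x₀ ε 0 f := by
    obtain ⟨f, hf0, hfd⟩ := step 0 x₀ le_rfl
    refine ⟨f, hf0, ?_⟩
    have : (((0:ℕ):ℝ)*ε + ε) = 0 + ε := by push_cast; ring
    rw [this, show -ε = 0 - ε by ring]
    exact hfd
  -- inductive step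
  have key : ∀ (n : ℕ) (f : ℝ → EE), Qprop x₀ ε n f →
      ∃ g, Qprop x₀ ε (n+1) g ∧ ∀ t ∈ Iic ((n:ℝ)*ε+ε), g t = f t := by
    intro n f hQ
    set T : ℝ := (n:ℝ)*ε + ε with hTdef
    have hT0 : 0 ≤ T := by positivity
    have hnegε : -ε ≤ 0 := by linarith
    have hfT : ‖f T‖ ≤ ‖x₀‖ := by
      have := invariance hnegε hT0 hQ.2 T ⟨hT0, le_rfl⟩
      rwa [hQ.1] at this
    obtain ⟨ext, hext0, hextd⟩ := step T (f T) hfT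
    refine ⟨fun t => if t ≤ T then f t else ext t, ⟨by simp [hT0, hQ.1], ?_⟩,
      fun t htT => if_pos htT⟩
    have hcast : (((n+1:ℕ)):ℝ)*ε + ε = T + ε := by push_cast; ring
    rw [hcast]
    intro t ht
    set g : ℝ → EE := fun t => if t ≤ T then f t else ext t with hgdef
    have hgeq : ∀ y ∈ Icc (-ε) T, g y = f y := fun y hy => if_pos hy.2
    have hgeq2 : ∀ y ∈ Icc T (T+ε), g y = ext y := by
      intro y hy
      by_cases hyT : y ≤ T
      · have : y = T := le_antisymm hyT hy.1
        subst this
        simp only [hgdef, if_pos le_rfl, hext0]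
      · exact if_neg hyT
    have h₁ : HasDerivWithinAt g (Fv (g t)) (Icc (-ε) T) t := by
      by_cases htT : t ≤ T
      · have hmem : t ∈ Icc (-ε) T := ⟨ht.1, htT⟩
        have hgt : g t = f t := hgeq t hmem
        rw [hgt]
        exact (hQ.2 t hmem).congr hgeq hgt
      · have : t ∉ closure (Icc (-ε) T) := by
          rw [closure_Icc]
          exact fun hmem => htT hmem.2
        exact HasFDerivWithinAt.of_notMem_closure this
    have h₂ : HasDerivWithinAt g (Fv (g t)) (Icc T (T+ε)) t := by
      by_cases htT : T ≤ t
      · have hmem : t ∈ Icc T (T+ε) := ⟨htT, ht.2⟩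
        have hgt : g t = ext t := hgeq2 t hmem
        rw [hgt]
        exact (((hextd t ⟨by linarith [hmem.1], hmem.2⟩).mono
          (Icc_subset_Icc (by linarith) le_rfl)).congr hgeq2 hgt)
      · have : t ∉ closure (Icc T (T+ε)) := by
          rw [closure_Icc]
          exact fun hmem => htT hmem.1
        exact HasFDerivWithinAt.of_notMem_closure this
    exact (h₁.union h₂).mono
      (Icc_union_Icc_eq_Icc (by linarith : -ε ≤ T) (by linarith : T ≤ T+ε)).symm.subset
  choose! stepf hstep1 hstep2 using key
  obtain ⟨f₀, hf₀⟩ := base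
  set sol : ℕ → ℝ → EE := fun n => Nat.rec f₀ (fun n fn => stepf n fn) n with hsoldef
  have hQs : ∀ n, Qprop x₀ ε n (sol n) := by
    intro n
    induction n with
    | zero => exact hf₀
    | succ n ih => exact hstep1 n _ ih
  have hag : ∀ n : ℕ, ∀ t ∈ Iic ((n:ℝ)*ε+ε), sol (n+1) t = sol n t :=
    fun n => hstep2 n _ (hQs n)
  have hchain : ∀ m n : ℕ, m ≤ n → ∀ t, t ≤ (m:ℝ)*ε+ε → sol n t = sol m t := by
    intro m n hmn
    induction n with
    | zero =>
      have : m = 0 := Nat.le_zero.mp hmn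
      subst this; exact fun t _ => rfl
    | succ n ih =>
      rcases Nat.lt_or_ge m (n+1) with h | h
      · intro t ht
        have hm_n : m ≤ n := Nat.lt_succ_iff.mp h
        have hmn' : (m:ℝ)*ε ≤ (n:ℝ)*ε :=
          mul_le_mul_of_nonneg_right (Nat.cast_le.mpr hm_n) hε0.le
        rw [hag n t (by simp only [mem_Iic]; linarith)]
        exact ih hm_n t ht
      · have : m = n+1 := le_antisymm hmn h
        subst this; exact fun t _ => rfl
  set G : ℝ → EE := fun t => sol (Nat.ceil ((max t 0)/ε)) t with hGdef
  have hG0 : G 0 = x₀ := (hQs _).1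
  refine ⟨G, hG0, ?_⟩
  intro t ht
  simp only [mem_Ici] at ht
  set n : ℕ := Nat.ceil ((t+1)/ε) with hndef
  have hεn : t + 1 ≤ (n:ℝ)*ε := by
    have h1 := Nat.le_ceil ((t+1)/ε)
    rw [div_le_iff₀ hε0] at h1
    exact h1
  have heq : ∀ s ∈ Iio (t+1), G s = sol n s := by
    intro s hs
    simp only [mem_Iio] at hs
    show sol (Nat.ceil ((max s 0)/ε)) s = sol n s
    have h1 : Nat.ceil ((max s 0)/ε) ≤ n := by
      apply Nat.ceil_le_ceil
      have hm : max s 0 ≤ t+1 := max_le hs.le (by linarith)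
      gcongr
    have h2 : s ≤ (Nat.ceil ((max s 0)/ε) : ℝ)*ε + ε := by
      have h3 := Nat.le_ceil ((max s 0)/ε)
      rw [div_le_iff₀ hε0] at h3
      have h4 : s ≤ max s 0 := le_max_left _ _
      linarith
    exact (hchain _ n h1 s h2).symm
  have hGev : G =ᶠ[nhds t] sol n :=
    Filter.eventuallyEq_of_mem (Iio_mem_nhds (by linarith)) heq
  have hd : HasDerivAt (sol n) (Fv (sol n t)) t := by
    have h := (hQs n).2 t ⟨by linarith, by linarith⟩
    exact h.hasDerivAt (Icc_mem_nhds (by linarith) (by linarith))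
  have hfinal : HasDerivAt G (Fv (sol n t)) t := hd.congr_of_eventuallyEq hGev
  rw [show G t = sol n t from heq t (mem_Iio.mpr (by linarith))]
  exact hfinal

section Part2
variable {b c p q : ℝ → ℝ}

lemma partA (hsol : IsSol b c p q) :
    ∀ s t : ℝ, 0 ≤ s → s ≤ t →
      (b t)^2 ≤ (b s)^2 ∧ (c t)^2 ≤ (c s)^2 ∧ (p t)^2 ≤ (p s)^2 ∧ (q t)^2 ≤ (q s)^2 := by
  intro s t hs hst
  have hmem : ∀ x ∈ Icc s t, x ∈ Ici (0:ℝ) := fun x hx => le_trans hs hx.1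
  have hmem' : ∀ x ∈ Ico s t, x ∈ Ici (0:ℝ) := fun x hx => le_trans hs hx.1
  refine ⟨?_, ?_, ?_, ?_⟩
  · exact sq_anti (g := fun x => -(hval (b x) (c x) (p x) (q x))) hst
      (fun x hx => ((hsol x (hmem x hx)).1).continuousAt.continuousWithinAt)
      (fun x hx => ((hsol x (hmem' x hx)).1).hasDerivWithinAt)
      (fun x _ => by nlinarith [hval_nonneg (b x) (c x) (p x) (q x)])
  · exact sq_anti (g := fun x => -3 * hval (b x) (c x) (p x) (q x)) hst
      (fun x hx => ((hsol x (hmem x hx)).2.1).continuousAt.continuousWithinAt)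
      (fun x hx => ((hsol x (hmem' x hx)).2.1).hasDerivWithinAt)
      (fun x _ => by nlinarith [hval_nonneg (b x) (c x) (p x) (q x)])
  · exact sq_anti (g := fun x => -(kval (b x) (c x) (p x) (q x) * (b x)^2
        + 3 * hval (b x) (c x) (p x) (q x))) hst
      (fun x hx => ((hsol x (hmem x hx)).2.2.1).continuousAt.continuousWithinAt)
      (fun x hx => ((hsol x (hmem' x hx)).2.2.1).hasDerivWithinAt)
      (fun x _ => by nlinarith [hval_nonneg (b x) (c x) (p x) (q x), kval_nonneg (b x) (c x) (p x) (q x), sq_nonneg (b x)])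
  · exact sq_anti (g := fun x => -(kval (b x) (c x) (p x) (q x) * (b x)^2
        + 3 * hval (b x) (c x) (p x) (q x))) hst
      (fun x hx => ((hsol x (hmem x hx)).2.2.2).continuousAt.continuousWithinAt)
      (fun x hx => ((hsol x (hmem' x hx)).2.2.2).hasDerivWithinAt)
      (fun x _ => by nlinarith [hval_nonneg (b x) (c x) (p x) (q x), kval_nonneg (b x) (c x) (p x) (q x), sq_nonneg (b x)])

/-- The key differential inequality `r' ≤ -(3/2) r³`. -/
lemma deriv_r_bound (B C P Q : ℝ) :
    2 * C * (-3 * hval B C P Q * C) +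
      (2 * P * (-(kval B C P Q * B^2 + 3 * hval B C P Q) * P) +
       2 * Q * (-(kval B C P Q * B^2 + 3 * hval B C P Q) * Q)) ≤
      -(3/2) * (C^2 + P^2 + Q^2)^3 := by
  simp only [hval, kval]
  nlinarith [sq_nonneg B, sq_nonneg C, sq_nonneg P, sq_nonneg Q,
    sq_nonneg (B*P), sq_nonneg (B*Q), sq_nonneg (B*C),
    mul_nonneg (mul_nonneg (sq_nonneg B) (sq_nonneg P)) (sq_nonneg C),
    mul_nonneg (mul_nonneg (sq_nonneg B) (sq_nonneg Q)) (sq_nonneg C),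
    mul_nonneg (sq_nonneg B) (sq_nonneg (P*Q)),
    mul_nonneg (mul_nonneg (sq_nonneg B) (sq_nonneg P)) (sq_nonneg P),
    mul_nonneg (mul_nonneg (sq_nonneg B) (sq_nonneg Q)) (sq_nonneg Q)]

lemma contact_ineq {r x w r₀ : ℝ} (h1 : 0 ≤ r) (h2 : r ≤ r₀) (h3 : |x| ≤ r₀)
    (h4 : 0 < w) (h5 : r = x + w) :
    -((3/2) * r^3) < -((3/2) * x^3) + w * ((9/2)*r₀^2 + 1) := by
  have hr₀ : 0 ≤ r₀ := le_trans h1 h2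
  have hx' := abs_le.mp h3
  have hx2 : x^2 ≤ r₀^2 := by nlinarith
  have hr2 : r^2 ≤ r₀^2 := by nlinarith
  have hrx : r*x ≤ r₀^2 := by nlinarith
  have hsum : r^2 + r*x + x^2 ≤ 3*r₀^2 := by linarith
  have hmul := mul_le_mul_of_nonneg_left hsum h4.le
  have hid : r^3 - x^3 = w*(r^2 + r*x + x^2) := by rw [h5]; ring
  have hpos : 0 ≤ r^2 + r*x + x^2 := by nlinarith [sq_nonneg (r+x), sq_nonneg x, sq_nonneg r]
  have hA : 0 ≤ w*(r^2 + r*x + x^2) := mul_nonneg h4.le hpos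
  have hB : 0 ≤ (9/2)*r₀^2*w := by positivity
  nlinarith [hmul, h4, hid, hA, hB]

/-- Comparison with any solution of `x' = -(3/2) x³`. -/
lemma partB (hsol : IsSol b c p q) (x : ℝ → ℝ)
    (hx0 : x 0 = (c 0)^2 + (p 0)^2 + (q 0)^2)
    (hx : ∀ t ∈ Ici (0:ℝ), HasDerivAt x (-(3/2) * (x t)^3) t) :
    ∀ t ∈ Ici (0:ℝ), (c t)^2 + (p t)^2 + (q t)^2 ≤ x t := by
  set r : ℝ → ℝ := fun t => (c t)^2 + (p t)^2 + (q t)^2 with hrdef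
  set r₀ : ℝ := r 0 with hr₀def
  have hr₀ : 0 ≤ r₀ := by
    show (0:ℝ) ≤ (c 0)^2 + (p 0)^2 + (q 0)^2
    positivity
  have hrmono : ∀ t ∈ Ici (0:ℝ), 0 ≤ r t ∧ r t ≤ r₀ := by
    intro t ht
    obtain ⟨_, h2, h3, h4⟩ := partA hsol 0 t le_rfl ht
    constructor
    · show (0:ℝ) ≤ (c t)^2 + (p t)^2 + (q t)^2
      positivity
    · show (c t)^2 + (p t)^2 + (q t)^2 ≤ (c 0)^2 + (p 0)^2 + (q 0)^2
      linarith
  -- |x t| ≤ r₀ for t ≥ 0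
  have hxbound : ∀ t ∈ Ici (0:ℝ), |x t| ≤ r₀ := by
    intro t ht
    have hsq : (x t)^2 ≤ (x 0)^2 := by
      apply sq_anti (g := fun u => -(3/2)*(x u)^2) ht
        (fun u hu => (hx u hu.1).continuousAt.continuousWithinAt)
      · intro u hu
        have h := (hx u hu.1).hasDerivWithinAt (s := Ici u)
        have heq : -(3/2) * (x u)^3 = (-(3/2)*(x u)^2) * x u := by ring
        rwa [heq] at h
      · intro u _; nlinarith [sq_nonneg (x u)]
    have h2 := abs_le_abs_of_sq hsq
    rw [hx0, abs_of_nonneg (by positivity : (0:ℝ) ≤ (c 0)^2+(p 0)^2+(q 0)^2)] at h2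
    exact h2
  set K : ℝ := (9/2)*r₀^2 + 1 with hKdef
  -- the fencing estimate
  have main : ∀ δ > (0:ℝ), ∀ t ∈ Ici (0:ℝ), r t ≤ x t + δ * Real.exp (K * t) := by
    intro δ hδ t ht
    have key := image_le_of_deriv_right_lt_deriv_boundary'
      (f := r)
      (f' := fun u => 2 * c u * (-3 * hval (b u) (c u) (p u) (q u) * c u) +
        (2 * p u * (-(kval (b u) (c u) (p u) (q u) * (b u)^2
            + 3 * hval (b u) (c u) (p u) (q u)) * p u) +
         2 * q u * (-(kval (b u) (c u) (p u) (q u) * (b u)^2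
            + 3 * hval (b u) (c u) (p u) (q u)) * q u)))
      (B := fun u => x u + δ * Real.exp (K * u))
      (B' := fun u => -(3/2) * (x u)^3 + δ * (Real.exp (K * u) * K))
      (a := 0) (b := t) ?_ ?_ ?_ ?_ ?_ ?_
    · exact key ⟨ht, le_rfl⟩
    · intro u hu
      have hu0 : (0:ℝ) ≤ u := hu.1
      have h := (((hsol u hu0).2.1.continuousAt.continuousWithinAt
          (s := Icc 0 t)).pow 2).add
        ((((hsol u hu0).2.2.1.continuousAt.continuousWithinAt).pow 2).add
          (((hsol u hu0).2.2.2.continuousAt.continuousWithinAt).pow 2))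
      have hfun : (fun y => (c y)^2 + ((p y)^2 + (q y)^2)) = r := by
        funext y
        show _ = (c y)^2 + (p y)^2 + (q y)^2
        ring
      rwa [show (c ^ 2 + (p ^ 2 + q ^ 2) : ℝ → ℝ) = r from hfun] at h
    · intro u hu
      have hu0 : (0:ℝ) ≤ u := hu.1
      have h := (((hsol u hu0).2.1.hasDerivWithinAt (s := Ici u)).pow 2).add
        ((((hsol u hu0).2.2.1.hasDerivWithinAt (s := Ici u)).pow 2).add
          (((hsol u hu0).2.2.2.hasDerivWithinAt (s := Ici u)).pow 2))
      have hfun : (fun y => (c y)^2 + ((p y)^2 + (q y)^2)) = r := by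
        funext y
        show _ = (c y)^2 + (p y)^2 + (q y)^2
        ring
      rw [show (c ^ 2 + (p ^ 2 + q ^ 2) : ℝ → ℝ) = r from hfun] at h
      refine h.congr_deriv ?_
      push_cast
      ring
    · show r 0 ≤ x 0 + δ * Real.exp (K * 0)
      simp only [mul_zero, Real.exp_zero, mul_one, hx0]
      show (c 0)^2 + (p 0)^2 + (q 0)^2 ≤ (c 0)^2 + (p 0)^2 + (q 0)^2 + δ
      linarith
    · intro u hu
      have hu0 : (0:ℝ) ≤ u := hu.1
      exact ((hx u hu0).continuousAt.continuousWithinAt).add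
        ((continuous_const.mul (Real.continuous_exp.comp
          (continuous_const.mul continuous_id))).continuousAt.continuousWithinAt)
    · intro u hu
      have hu0 : (0:ℝ) ≤ u := hu.1
      have hexp : HasDerivAt (fun s => δ * Real.exp (K * s)) (δ * (Real.exp (K * u) * K)) u := by
        have h1 : HasDerivAt (fun s : ℝ => K * s) K u := by
          simpa using (hasDerivAt_id u).const_mul K
        exact ((Real.hasDerivAt_exp (K*u)).comp u h1).const_mul δ
      exact ((hx u hu0).add hexp).hasDerivWithinAt
    · intro u hu heq
      have hu0 : (0:ℝ) ≤ u := hu.1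
      have hub := deriv_r_bound (b u) (c u) (p u) (q u)
      have hw : 0 < δ * Real.exp (K * u) := by positivity
      have hrr := hrmono u hu0
      have hxx := hxbound u hu0
      have hlt := contact_ineq hrr.1 hrr.2 hxx hw (heq : r u = x u + δ * Real.exp (K*u))
      show 2 * c u * (-3 * hval (b u) (c u) (p u) (q u) * c u) +
        (2 * p u * (-(kval (b u) (c u) (p u) (q u) * (b u)^2
            + 3 * hval (b u) (c u) (p u) (q u)) * p u) +
         2 * q u * (-(kval (b u) (c u) (p u) (q u) * (b u)^2
            + 3 * hval (b u) (c u) (p u) (q u)) * q u)) <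
        -(3/2) * (x u)^3 + δ * (Real.exp (K * u) * K)
      have hru : (c u)^2 + (p u)^2 + (q u)^2 = r u := rfl
      calc 2 * c u * (-3 * hval (b u) (c u) (p u) (q u) * c u) +
        (2 * p u * (-(kval (b u) (c u) (p u) (q u) * (b u)^2
            + 3 * hval (b u) (c u) (p u) (q u)) * p u) +
         2 * q u * (-(kval (b u) (c u) (p u) (q u) * (b u)^2
            + 3 * hval (b u) (c u) (p u) (q u)) * q u))
          ≤ -(3/2) * ((c u)^2 + (p u)^2 + (q u)^2)^3 := hub
      _ = -((3/2) * (r u)^3) := by rw [hru]; ring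
      _ < -((3/2) * (x u)^3) + (δ * Real.exp (K*u)) * ((9/2)*r₀^2+1) := hlt
      _ = -(3/2) * (x u)^3 + δ * (Real.exp (K * u) * K) := by rw [hKdef]; ring
  intro t ht
  apply le_of_forall_pos_le_add
  intro η hη
  have hδ : 0 < η / Real.exp (K * t) := by positivity
  have hfin := main _ hδ t ht
  rwa [div_mul_cancel₀ _ (Real.exp_ne_zero _)] at hfin
end Part2

lemma partC {b c p q : ℝ → ℝ} (hsol : IsSol b c p q) :
    Filter.Tendsto c Filter.atTop (nhds 0) ∧ Filter.Tendsto p Filter.atTop (nhds 0) ∧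
    Filter.Tendsto q Filter.atTop (nhds 0) := by
  set r₀ : ℝ := (c 0)^2 + (p 0)^2 + (q 0)^2 with hr₀def
  have hr₀ : 0 ≤ r₀ := by positivity
  set X : ℝ → ℝ := fun t => r₀ / Real.sqrt (1 + 3*r₀^2*t) with hXdef
  have hX0 : X 0 = (c 0)^2 + (p 0)^2 + (q 0)^2 := by
    show r₀ / Real.sqrt (1 + 3*r₀^2*0) = r₀
    norm_num
  have hXd : ∀ t ∈ Ici (0:ℝ), HasDerivAt X (-(3/2) * (X t)^3) t := by
    rcases eq_or_lt_of_le hr₀ with hz | hpos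
    · have hXconst : X = fun _ => (0:ℝ) := by
        funext s
        show r₀ / Real.sqrt (1 + 3*r₀^2*s) = 0
        rw [← hz]
        simp
      intro t _
      rw [hXconst]
      simpa using hasDerivAt_const t (0:ℝ)
    · intro t ht
      have ht0 : (0:ℝ) ≤ t := ht
      have hu : 0 < 1 + 3*r₀^2*t := by
        have : 0 ≤ 3*r₀^2*t := by positivity
        linarith
      set S : ℝ := Real.sqrt (1 + 3*r₀^2*t) with hSdef
      have hS : 0 < S := Real.sqrt_pos.mpr hu
      have hS2 : S^2 = 1 + 3*r₀^2*t := Real.sq_sqrt hu.le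
      have hder1 : HasDerivAt (fun s : ℝ => 1 + 3*r₀^2*s) (3*r₀^2) t := by
        simpa using ((hasDerivAt_id t).const_mul (3*r₀^2)).const_add 1
      have hsqrt := hder1.sqrt (ne_of_gt hu)
      have hinv := hsqrt.inv (ne_of_gt hS)
      have hX := hinv.const_mul r₀
      have hXeq : X = fun s => r₀ * (Real.sqrt (1 + 3*r₀^2*s))⁻¹ := by
        funext s
        exact div_eq_mul_inv _ _
      rw [hXeq]
      refine hX.congr_deriv ?_; symm
      show -(3/2) * (r₀ * S⁻¹)^3 = r₀ * (-(3*r₀^2 / (2 * S)) / S^2)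
      field_simp
  have hrle := partB hsol X hX0 hXd
  have hXto : Filter.Tendsto X Filter.atTop (nhds 0) := by
    rcases eq_or_lt_of_le hr₀ with hz | hpos
    · have hXconst : X = fun _ => (0:ℝ) := by
        funext s
        show r₀ / Real.sqrt (1 + 3*r₀^2*s) = 0
        rw [← hz]; simp
      rw [hXconst]
      exact tendsto_const_nhds
    · have hden : Filter.Tendsto (fun t : ℝ => 1 + 3*r₀^2*t) Filter.atTop Filter.atTop :=
        Filter.tendsto_atTop_add_const_left _ 1
          (Filter.Tendsto.const_mul_atTop (by positivity) Filter.tendsto_id)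
      have hinv : Filter.Tendsto (fun t : ℝ => (1 + 3*r₀^2*t)⁻¹) Filter.atTop (nhds 0) :=
        hden.inv_tendsto_atTop
      have hsq : Filter.Tendsto (fun t : ℝ => r₀^2 * (1 + 3*r₀^2*t)⁻¹) Filter.atTop (nhds 0) := by
        simpa using hinv.const_mul (r₀^2)
      have hsqrtto : Filter.Tendsto (fun t : ℝ => Real.sqrt (r₀^2 * (1 + 3*r₀^2*t)⁻¹))
          Filter.atTop (nhds 0) := by
        have h := (Real.continuous_sqrt.tendsto 0).comp hsq
        simpa [Function.comp_def] using h
      apply hsqrtto.congr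
      intro t
      rw [Real.sqrt_mul (sq_nonneg r₀), Real.sqrt_sq hr₀, Real.sqrt_inv]
      exact (div_eq_mul_inv _ _).symm
  have limsq : ∀ y : ℝ → ℝ, (∀ t ∈ Ici (0:ℝ), (y t)^2 ≤ X t) →
      Filter.Tendsto y Filter.atTop (nhds 0) := by
    intro y hy
    have hy2 : Filter.Tendsto (fun t => (y t)^2) Filter.atTop (nhds 0) := by
      apply tendsto_of_tendsto_of_tendsto_of_le_of_le' tendsto_const_nhds hXto
      · exact Filter.Eventually.of_forall fun t => sq_nonneg (y t)
      · exact (Filter.eventually_ge_atTop 0).mono fun t ht => hy t ht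
    have habs : Filter.Tendsto (fun t => |y t|) Filter.atTop (nhds 0) := by
      have h := (Real.continuous_sqrt.tendsto 0).comp hy2
      rw [show Real.sqrt 0 = 0 from Real.sqrt_zero] at h
      apply h.congr
      intro t
      exact congrArg _ rfl |>.trans (Real.sqrt_sq_eq_abs (y t))
    exact (tendsto_zero_iff_abs_tendsto_zero _).mpr habs
  refine ⟨limsq c ?_, limsq p ?_, limsq q ?_⟩ <;>
    · intro t ht
      have := hrle t ht
      nlinarith [sq_nonneg (c t), sq_nonneg (p t), sq_nonneg (q t)]


end Stmt18Aux

/-- Gauged bracket flow of the balanced flow: along any solution `b²,c²,p²,q²`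
are non-increasing, the solution exists for all positive times, the quantity
`c²+p²+q²` is dominated by the solution of `x' = -(3/2)x³`, and `c,p,q → 0`. -/
theorem stmt_18 (b₀ c₀ p₀ q₀ : ℝ) :
    (∃ b c p q : ℝ → ℝ,
      b 0 = b₀ ∧ c 0 = c₀ ∧ p 0 = p₀ ∧ q 0 = q₀ ∧ IsSol b c p q) ∧
    (∀ b c p q : ℝ → ℝ, b 0 = b₀ → c 0 = c₀ → p 0 = p₀ → q 0 = q₀ →
      IsSol b c p q →
      (∀ s t : ℝ, 0 ≤ s → s ≤ t →
        (b t)^2 ≤ (b s)^2 ∧ (c t)^2 ≤ (c s)^2 ∧ (p t)^2 ≤ (p s)^2 ∧ (q t)^2 ≤ (q s)^2) ∧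
      (∀ x : ℝ → ℝ, x 0 = c₀^2 + p₀^2 + q₀^2 →
        (∀ t ∈ Set.Ici (0:ℝ), HasDerivAt x (-(3/2) * (x t)^3) t) →
        ∀ t ∈ Set.Ici (0:ℝ), (c t)^2 + (p t)^2 + (q t)^2 ≤ x t) ∧
      Tendsto c atTop (nhds 0) ∧ Tendsto p atTop (nhds 0) ∧
      Tendsto q atTop (nhds 0)) := by

  constructor
  · obtain ⟨f, hf0, hfd⟩ := exists_global (b₀, c₀, p₀, q₀)
    refine ⟨fun t => (f t).1, fun t => (f t).2.1, fun t => (f t).2.2.1, fun t => (f t).2.2.2,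
      by show (f 0).1 = b₀; rw [hf0], by show (f 0).2.1 = c₀; rw [hf0], by show (f 0).2.2.1 = p₀; rw [hf0], by show (f 0).2.2.2 = q₀; rw [hf0], ?_⟩
    intro t ht
    have hd := (hfd t ht).hasDerivWithinAt (s := Set.univ)
    obtain ⟨h1, h2, h3, h4⟩ := proj_deriv hd
    rw [hasDerivWithinAt_univ] at h1 h2 h3 h4
    exact ⟨by simpa [Fv] using h1, by simpa [Fv] using h2,
      by simpa [Fv] using h3, by simpa [Fv] using h4⟩
  · intro b c p q hb0 hc0 hp0 hq0 hsol
    refine ⟨partA hsol, ?_, partC hsol⟩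
    intro x hx0 hx
    exact partB hsol x (by rw [hx0, hc0, hp0, hq0]) hx
end
end
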